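/- arXiv:1511.04600 — 7 statements merged into one kernel-verified Lean document; each statement's English description precedes it below -/
import Mathlib

section
/- Let f, g : {0,1}^n → ℝ be increasing. Then the function ρ ↦ ⟨T_ρ f, g⟩ is non-decreasing on [0,1], where ⟨·,·⟩ denotes the inner product with respect to the uniform measure on {0,1}^n. Equivalently, ρ ↦ Cov(T_ρ f, g) is non-decreasing on [0,1]. -/
/-! Expanding `T_ρ f`, `⟨T_ρ f, g⟩ = ∑_S ρ^|S| f̂(S) ĝ(S)` is a polynomial in `ρ`. With the discrete
derivative `D_k f(x) = (f(x^{k←1}) - f(x^{k←0})) / 2` one has `f̂(T ∪ {k}) = -(D_k f)^(T)` for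
`k ∉ T`, so the derivative in `ρ` is `∑_k ∑_{T ∌ k} ρ^|T| (D_k f)^(T) (D_k g)^(T)`. Each inner sum
equals `E_{x,y}[D_k f(x) D_k g(y) ∏_{i ≠ k} (1 + ρ u_i(x) u_i(y))]`, which is nonnegative for
`|ρ| ≤ 1` because increasing functions have nonnegative discrete derivatives.
The covariance version follows since `Cov(h, g) = ⟨h, g - E g⟩` and `g - E g` is again increasing. -/

open Finset

/-- Expectation with respect to the uniform measure on `{0,1}^n`. -/
noncomputable def expect (n : ℕ) (f : (Fin n → Bool) → ℝ) : ℝ :=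
  (∑ x : Fin n → Bool, f x) / 2 ^ n

/-- The Fourier-Walsh character `u_S`. -/
noncomputable def chi (n : ℕ) (S : Finset (Fin n)) (x : Fin n → Bool) : ℝ :=
  ∏ i ∈ S, (if x i then (-1 : ℝ) else 1)

/-- Fourier-Walsh coefficient `f̂(S)`. -/
noncomputable def coef (n : ℕ) (f : (Fin n → Bool) → ℝ) (S : Finset (Fin n)) : ℝ :=
  expect n (fun x => f x * chi n S x)

/-- The noise operator: `T_ρ f = Σ_S ρ^{|S|} f̂(S) u_S`. -/
noncomputable def noise (n : ℕ) (ρ : ℝ) (f : (Fin n → Bool) → ℝ) :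
    (Fin n → Bool) → ℝ :=
  fun x => ∑ S : Finset (Fin n), ρ ^ S.card * coef n f S * chi n S x

/-- Covariance with respect to the uniform measure. -/
noncomputable def cov (n : ℕ) (f g : (Fin n → Bool) → ℝ) : ℝ :=
  expect n (fun x => f x * g x) - expect n f * expect n g

/-- `x ⊕ e_k`: flip the k-th coordinate. -/
def flipBit (n : ℕ) (x : Fin n → Bool) (k : Fin n) : Fin n → Bool :=
  Function.update x k (!x k)

open Function
open scoped BigOperators

lemma sum_card_smul_eq_sum_sum_powerset_insert {ι M : Type*} [Fintype ι] [DecidableEq ι]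
    [AddCommMonoid M] (c : Finset ι → M) :
    ∑ S, #S • c S = ∑ k, ∑ T ∈ (univ.erase k).powerset, c (insert k T) := by
  have hcount : ∀ S : Finset ι, #S • c S = ∑ k, if k ∈ S then c S else 0 := by
    intro S
    rw [sum_ite_mem, univ_inter, sum_const]
  simp only [hcount]
  rw [sum_comm]
  refine sum_congr rfl fun k _ => ?_
  have hsplit := sum_powerset_insert (notMem_erase k univ) fun S => if k ∈ S then c S else 0
  rw [insert_erase (mem_univ k), powerset_univ] at hsplit
  rw [hsplit, sum_eq_zero fun T hT => if_neg fun hk => notMem_erase k univ (mem_powerset.1 hT hk),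
    zero_add]
  exact sum_congr rfl fun T _ => if_pos (mem_insert_self k T)

section

variable {n : ℕ}

lemma expect_eq_expect_univ (f : (Fin n → Bool) → ℝ) : expect n f = 𝔼 x, f x := by
  simp [_root_.expect, Fintype.expect_eq_sum_div_card]

lemma cov_eq_expect_mul_sub (h g : (Fin n → Bool) → ℝ) :
    cov n h g = expect n (fun x => h x * (g x - expect n g)) := by
  simp only [cov, expect_eq_expect_univ, mul_sub, expect_sub_distrib, ← expect_mul]

lemma flipBit_flipBit (x : Fin n → Bool) (k : Fin n) : flipBit n (flipBit n x k) k = x := by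
  simp [flipBit]

lemma expect_comp_flipBit (F : (Fin n → Bool) → ℝ) (k : Fin n) :
    expect n (fun x => F (flipBit n x k)) = expect n F := by
  simp only [expect_eq_expect_univ]
  exact Fintype.expect_equiv (Involutive.toPerm _ (flipBit_flipBit · k)) _ _ fun _ => rfl

lemma chi_insert {T : Finset (Fin n)} {k : Fin n} (hk : k ∉ T) (x : Fin n → Bool) :
    chi n (insert k T) x = (if x k then -1 else 1) * chi n T x :=
  prod_insert hk

lemma chi_flipBit_of_notMem {T : Finset (Fin n)} {k : Fin n} (hk : k ∉ T) (x : Fin n → Bool) :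
    chi n T (flipBit n x k) = chi n T x :=
  prod_congr rfl fun i hi => by rw [flipBit, update_of_ne (ne_of_mem_of_not_mem hi hk)]

noncomputable def bitDeriv (k : Fin n) (f : (Fin n → Bool) → ℝ) (x : Fin n → Bool) : ℝ :=
  (f (update x k true) - f (update x k false)) / 2

lemma bitDeriv_nonneg {f : (Fin n → Bool) → ℝ} (hf : Monotone f) (k : Fin n) :
    0 ≤ bitDeriv k f := fun x => by
  have := hf (update_le_update_iff'.mpr (Bool.false_le true) : update x k false ≤ update x k true)
  exact div_nonneg (sub_nonneg.2 this) two_pos.le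

lemma chi_insert_mul_add_flipBit (f : (Fin n → Bool) → ℝ) {T : Finset (Fin n)} {k : Fin n}
    (hk : k ∉ T) (x : Fin n → Bool) :
    f x * chi n (insert k T) x + f (flipBit n x k) * chi n (insert k T) (flipBit n x k)
      = -2 * (bitDeriv k f x * chi n T x) := by
  rw [chi_insert hk, chi_insert hk, chi_flipBit_of_notMem hk]
  have hself := update_eq_self k x
  cases hx : x k <;> rw [hx] at hself <;>
    simp only [flipBit, bitDeriv, hx, hself, update_self, Bool.not_false, Bool.not_true,
      Bool.false_eq_true, ↓reduceIte] <;> ring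

lemma coef_insert (f : (Fin n → Bool) → ℝ) {T : Finset (Fin n)} {k : Fin n} (hk : k ∉ T) :
    coef n f (insert k T) = -coef n (bitDeriv k f) T := by
  have hflip := expect_comp_flipBit (fun x => f x * chi n (insert k T) x) k
  simp only [coef, expect_eq_expect_univ] at hflip ⊢
  have : 2 * 𝔼 x, f x * chi n (insert k T) x = -2 * 𝔼 x, bitDeriv k f x * chi n T x := by
    rw [two_mul]
    nth_rw 2 [← hflip]
    rw [← expect_add_distrib, mul_expect]
    simp only [chi_insert_mul_add_flipBit f hk]
  linarith

lemma expect_noise_mul (ρ : ℝ) (f g : (Fin n → Bool) → ℝ) :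
    expect n (fun x => noise n ρ f x * g x) = ∑ S, ρ ^ #S * (coef n f S * coef n g S) := by
  rw [expect_eq_expect_univ]
  simp only [noise, sum_mul]
  rw [expect_sum_comm]
  refine sum_congr rfl fun S _ => ?_
  rw [show coef n g S = 𝔼 x, g x * chi n S x from expect_eq_expect_univ _, ← mul_assoc,
    mul_expect]
  exact expect_congr rfl fun x _ => by ring

lemma sum_powerset_pow_mul_chi_mul_chi (ρ : ℝ) (A : Finset (Fin n)) (x y : Fin n → Bool) :
    ∑ T ∈ A.powerset, ρ ^ #T * (chi n T x * chi n T y)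
      = ∏ i ∈ A, (1 + ρ * ((if x i then -1 else 1) * (if y i then -1 else 1))) := by
  rw [prod_one_add]
  refine sum_congr rfl fun T _ => ?_
  rw [chi, chi, ← prod_mul_distrib, ← prod_const, ← prod_mul_distrib]

lemma sum_powerset_pow_mul_coef_mul_coef_nonneg {ρ : ℝ} (hρ : |ρ| ≤ 1) (A : Finset (Fin n))
    {h h' : (Fin n → Bool) → ℝ} (hh : 0 ≤ h) (hh' : 0 ≤ h') :
    0 ≤ ∑ T ∈ A.powerset, ρ ^ #T * (coef n h T * coef n h' T) := by
  have hkernel : ∀ x y : Fin n → Bool, ∀ i ∈ A,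
      0 ≤ 1 + ρ * ((if x i then -1 else 1) * (if y i then -1 else 1)) := by
    intro x y i _
    obtain ⟨hρl, hρu⟩ := abs_le.mp hρ
    cases x i <;> cases y i <;> norm_num <;> linarith
  have hcoef : ∀ T, ρ ^ #T * (coef n h T * coef n h' T)
      = 𝔼 x, 𝔼 y, h x * h' y * (ρ ^ #T * (chi n T x * chi n T y)) := by
    intro T
    simp only [coef, expect_eq_expect_univ]
    rw [expect_mul_expect, mul_expect]
    refine expect_congr rfl fun x _ => ?_
    rw [mul_expect]
    exact expect_congr rfl fun y _ => by ring
  simp only [hcoef, ← expect_sum_comm, ← mul_sum, sum_powerset_pow_mul_chi_mul_chi]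
  exact expect_nonneg fun x _ => expect_nonneg fun y _ =>
    mul_nonneg (mul_nonneg (hh x) (hh' y)) (prod_nonneg (hkernel x y))

lemma hasDerivAt_expect_noise_mul (f g : (Fin n → Bool) → ℝ) (ρ : ℝ) :
    HasDerivAt (fun ρ => expect n (fun x => noise n ρ f x * g x))
      (∑ k, ∑ T ∈ (univ.erase k).powerset,
        ρ ^ #T * (coef n (bitDeriv k f) T * coef n (bitDeriv k g) T)) ρ := by
  simp only [expect_noise_mul]
  refine (HasDerivAt.fun_sum fun S _ =>
    (hasDerivAt_pow #S ρ).mul_const (coef n f S * coef n g S)).congr_deriv ?_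
  simp only [← nsmul_eq_mul, smul_mul_assoc]
  rw [sum_card_smul_eq_sum_sum_powerset_insert]
  refine sum_congr rfl fun k _ => sum_congr rfl fun T hT => ?_
  have hk : k ∉ T := fun hk => notMem_erase k univ (mem_powerset.1 hT hk)
  rw [card_insert_of_notMem hk, Nat.add_sub_cancel, coef_insert f hk, coef_insert g hk,
    neg_mul_neg]

theorem monotoneOn_expect_noise_mul {f g : (Fin n → Bool) → ℝ} (hf : Monotone f)
    (hg : Monotone g) :
    MonotoneOn (fun ρ => expect n (fun x => noise n ρ f x * g x)) (Set.Icc (-1) 1) := by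
  have hderiv := hasDerivAt_expect_noise_mul f g
  refine monotoneOn_of_hasDerivWithinAt_nonneg (convex_Icc _ _)
    (continuous_iff_continuousAt.2 fun ρ => (hderiv ρ).continuousAt).continuousOn
    (fun ρ _ => (hderiv ρ).hasDerivWithinAt) fun ρ hρ => ?_
  rw [interior_Icc] at hρ
  exact sum_nonneg fun k _ => sum_powerset_pow_mul_coef_mul_coef_nonneg
    (abs_le.2 ⟨hρ.1.le, hρ.2.le⟩) _ (bitDeriv_nonneg hf k) (bitDeriv_nonneg hg k)

end

/-- Noise decreases correlation: for increasing `f, g : {0,1}^n → ℝ`, the maps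
`ρ ↦ ⟨T_ρ f, g⟩` and (equivalently) `ρ ↦ Cov(T_ρ f, g)` are non-decreasing on `[0,1]`. -/
theorem noise_decreases_correlation (n : ℕ) (f g : (Fin n → Bool) → ℝ)
    (hf : Monotone f) (hg : Monotone g) :
    MonotoneOn (fun ρ : ℝ => expect n (fun x => noise n ρ f x * g x))
      (Set.Icc (0 : ℝ) 1) ∧
    MonotoneOn (fun ρ : ℝ => cov n (noise n ρ f) g) (Set.Icc (0 : ℝ) 1) := by
  have hmono : ∀ g : (Fin n → Bool) → ℝ, Monotone g →
      MonotoneOn (fun ρ : ℝ => expect n (fun x => noise n ρ f x * g x)) (Set.Icc 0 1) :=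
    fun g hg => (monotoneOn_expect_noise_mul hf hg).mono (Set.Icc_subset_Icc (by norm_num) le_rfl)
  refine ⟨hmono g hg, ?_⟩
  simp only [cov_eq_expect_mul_sub]
  exact hmono _ fun x y hxy => sub_le_sub_right (hg hxy) _
end

section
/- The function φ(x) = x / log(e/x) is increasing and convex on the interval (0,1), and for all 0 < u ≤ v < 1 it satisfies φ(v) ≤ φ(u) + 2(v − u) / log(e/v). -/
/-- `φ(x) = x / log(e/x)`. -/
noncomputable def phi (x : ℝ) : ℝ := x / Real.log (Real.exp 1 / x)

/-!
Write `L(x) = log(e/x) = 1 - log x`, which is positive and strictly decreasing on `(0, e)` with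
`L' = -1/x`. Then `φ' = (L + 1)/L² = 1/L + 1/L²` is positive and strictly increasing there, so `φ`
is strictly increasing and strictly convex on `(0, e)`. For `u < v ≤ 1` convexity bounds the secant
slope of `φ` on `[u, v]` by `φ'(v)`, and `L(v) ≥ 1` gives `φ'(v) ≤ 2/L(v)`.
-/

open Set Real

lemma log_exp_one_div {x : ℝ} (hx : 0 < x) : log (exp 1 / x) = 1 - log x := by
  rw [log_div (exp_ne_zero 1) hx.ne', log_exp]

lemma log_exp_one_div_pos {x : ℝ} (hx : 0 < x) (hxe : x < exp 1) : 0 < log (exp 1 / x) :=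
  log_pos ((one_lt_div hx).2 hxe)

lemma hasDerivAt_phi {x : ℝ} (hx : 0 < x) (hxe : x ≠ exp 1) :
    HasDerivAt phi ((log (exp 1 / x))⁻¹ + (log (exp 1 / x) ^ 2)⁻¹) x := by
  have hL : log (exp 1 / x) ≠ 0 := by
    rw [log_exp_one_div hx, sub_ne_zero, ne_comm, Ne, ← exp_eq_exp, exp_log hx]
    exact hxe
  have hdL : HasDerivAt (fun y => log (exp 1 / y)) (-x⁻¹) x := by
    have h := (hasDerivAt_const x (1 : ℝ)).sub (hasDerivAt_log hx.ne')
    rw [zero_sub] at h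
    exact h.congr_of_eventuallyEq
      (eventually_gt_nhds hx |>.mono fun y hy => log_exp_one_div hy)
  refine ((hasDerivAt_id' x).div hdL hL).congr_deriv ?_
  field_simp
  ring

lemma strictMonoOn_deriv_phi : StrictMonoOn (deriv phi) (Ioo 0 (exp 1)) := by
  intro x hx y hy hxy
  rw [(hasDerivAt_phi hx.1 hx.2.ne).deriv, (hasDerivAt_phi hy.1 hy.2.ne).deriv]
  have hLy := log_exp_one_div_pos hy.1 hy.2
  have hLyx : log (exp 1 / y) < log (exp 1 / x) := by
    rw [log_exp_one_div hx.1, log_exp_one_div hy.1]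
    linarith [log_lt_log hx.1 hxy]
  gcongr

lemma continuousOn_phi : ContinuousOn phi (Ioo 0 (exp 1)) := fun _ hx =>
  (hasDerivAt_phi hx.1 hx.2.ne).continuousAt.continuousWithinAt

lemma strictMonoOn_phi : StrictMonoOn phi (Ioo 0 (exp 1)) :=
  strictMonoOn_of_deriv_pos (convex_Ioo 0 _) continuousOn_phi fun x hx => by
    rw [interior_Ioo] at hx
    rw [(hasDerivAt_phi hx.1 hx.2.ne).deriv]
    have := log_exp_one_div_pos hx.1 hx.2
    positivity

lemma strictConvexOn_phi : StrictConvexOn ℝ (Ioo 0 (exp 1)) phi :=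
  StrictMonoOn.strictConvexOn_of_deriv (convex_Ioo 0 _) continuousOn_phi
    (by rw [interior_Ioo]; exact strictMonoOn_deriv_phi)

lemma deriv_phi_le {x : ℝ} (hx : 0 < x) (hx1 : x ≤ 1) :
    deriv phi x ≤ 2 / log (exp 1 / x) := by
  have hxe : x < exp 1 := hx1.trans_lt (one_lt_exp_iff.2 one_pos)
  rw [(hasDerivAt_phi hx hxe.ne).deriv]
  have hL : 1 ≤ log (exp 1 / x) := by
    rw [log_exp_one_div hx]
    linarith [log_nonpos hx.le hx1]
  have hsq : (log (exp 1 / x) ^ 2)⁻¹ ≤ (log (exp 1 / x))⁻¹ :=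
    inv_anti₀ (by positivity) (le_self_pow₀ hL two_ne_zero)
  linarith [div_eq_mul_inv 2 (log (exp 1 / x))]

lemma phi_le_add_two_mul_sub_div {u v : ℝ} (hu : 0 < u) (huv : u ≤ v) (hv : v ≤ 1) :
    phi v ≤ phi u + 2 * (v - u) / log (exp 1 / v) := by
  rcases huv.eq_or_lt with rfl | huv
  · simp
  have hv0 := hu.trans huv
  have hve : v < exp 1 := hv.trans_lt (one_lt_exp_iff.2 one_pos)
  have hslope : slope phi u v ≤ deriv phi v :=
    strictConvexOn_phi.convexOn.slope_le_deriv ⟨hu, huv.trans hve⟩ ⟨hv0, hve⟩ huv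
      (hasDerivAt_phi hv0 hve.ne).differentiableAt
  rw [slope_def_field, div_le_iff₀ (sub_pos.2 huv)] at hslope
  have := mul_le_mul_of_nonneg_right (deriv_phi_le hv0 hv) (sub_pos.2 huv).le
  rw [mul_div_right_comm]
  linarith

/-- `φ` is increasing and convex on `(0,1)`, and for `0 < u ≤ v < 1`,
`φ(v) ≤ φ(u) + 2(v−u)/log(e/v)`. -/
theorem phi_increasing_convex :
    StrictMonoOn phi (Set.Ioo (0 : ℝ) 1) ∧
    ConvexOn ℝ (Set.Ioo (0 : ℝ) 1) phi ∧
    ∀ u v : ℝ, 0 < u → u ≤ v → v < 1 →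
      phi v ≤ phi u + 2 * (v - u) / Real.log (Real.exp 1 / v) := by
  have hsub : Ioo (0 : ℝ) 1 ⊆ Ioo 0 (exp 1) := Ioo_subset_Ioo_right (one_lt_exp_iff.2 one_pos).le
  exact ⟨strictMonoOn_phi.mono hsub,
    (strictConvexOn_phi.subset hsub (convex_Ioo 0 1)).convexOn,
    fun u v hu huv hv => phi_le_add_two_mul_sub_div hu huv hv.le⟩
end

section
/- For every n ∈ ℕ with n ≥ 1, the function ψ_n(x) = x / √(log(e³/(n x²))) is increasing and convex on the interval (0, 1/√n), and for all 0 < u ≤ v < 1/√n it satisfies ψ_n(v) ≤ ψ_n(u) + 2(v − u) / √(log(e³ / (n·((v+u)/2)²))). -/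
/-!
Write `ℓ(x) = log (e³ / (n x²)) = 3 - log n - 2 log x` and `g = ℓ^(-1/2)`, so that `ψ_n(x) = x g(x)`.
On `(0, 1/√n)` we have `ℓ > 3`, and `g` is increasing with `g' = g³ / x`; hence `ψ_n' = g + g³` is
positive and increasing. Moreover `(x / g³)' = (1 - 3 g²) / g³ ≥ 0` because `g² < 1/3` (this is
where the constant `e³` enters), so `g'` is decreasing, i.e. `g` is concave, and `x / g = (x / g³) g²`
is increasing. The last inequality follows from
`ψ(v) - ψ(u) = (v - u) (g(u) + g(v)) - (v g(u) - u g(v))`, where `u g(v) ≤ v g(u)` and, by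
concavity, `g(u) + g(v) ≤ 2 g((u + v) / 2)`.
-/

noncomputable def psiN (n : ℕ) (x : ℝ) : ℝ :=
  x / Real.sqrt (Real.log (Real.exp 1 ^ 3 / ((n : ℝ) * x ^ 2)))

open Real Set

section OpenConvex

variable {s : Set ℝ} {f f' : ℝ → ℝ}

theorem strictMonoOn_of_hasDerivAt_pos (hs : IsOpen s) (hs' : Convex ℝ s)
    (hf : ∀ x ∈ s, HasDerivAt f (f' x) x) (hf' : ∀ x ∈ s, 0 < f' x) : StrictMonoOn f s :=
  strictMonoOn_of_hasDerivWithinAt_pos hs'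
    (fun x hx ↦ (hf x hx).continuousAt.continuousWithinAt)
    (by rw [hs.interior_eq]; exact fun x hx ↦ (hf x hx).hasDerivWithinAt)
    (by rwa [hs.interior_eq])

theorem monotoneOn_of_hasDerivAt_nonneg (hs : IsOpen s) (hs' : Convex ℝ s)
    (hf : ∀ x ∈ s, HasDerivAt f (f' x) x) (hf' : ∀ x ∈ s, 0 ≤ f' x) : MonotoneOn f s :=
  monotoneOn_of_hasDerivWithinAt_nonneg hs'
    (fun x hx ↦ (hf x hx).continuousAt.continuousWithinAt)
    (by rw [hs.interior_eq]; exact fun x hx ↦ (hf x hx).hasDerivWithinAt)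
    (by rwa [hs.interior_eq])

theorem MonotoneOn.convexOn_of_hasDerivAt (hs : IsOpen s) (hs' : Convex ℝ s)
    (hf : ∀ x ∈ s, HasDerivAt f (f' x) x) (hf' : MonotoneOn f' s) : ConvexOn ℝ s f :=
  MonotoneOn.convexOn_of_deriv hs' (fun x hx ↦ (hf x hx).continuousAt.continuousWithinAt)
    (by rw [hs.interior_eq]; exact fun x hx ↦ (hf x hx).differentiableAt.differentiableWithinAt)
    (by rw [hs.interior_eq]; exact hf'.congr fun x hx ↦ (hf x hx).deriv.symm)

theorem AntitoneOn.concaveOn_of_hasDerivAt (hs : IsOpen s) (hs' : Convex ℝ s)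
    (hf : ∀ x ∈ s, HasDerivAt f (f' x) x) (hf' : AntitoneOn f' s) : ConcaveOn ℝ s f :=
  AntitoneOn.concaveOn_of_deriv hs' (fun x hx ↦ (hf x hx).continuousAt.continuousWithinAt)
    (by rw [hs.interior_eq]; exact fun x hx ↦ (hf x hx).differentiableAt.differentiableWithinAt)
    (by rw [hs.interior_eq]; exact hf'.congr fun x hx ↦ (hf x hx).deriv.symm)

theorem ConcaveOn.add_le_two_mul_map_half_add (hf : ConcaveOn ℝ s f) {x y : ℝ} (hx : x ∈ s)
    (hy : y ∈ s) : f x + f y ≤ 2 * f ((x + y) / 2) := by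
  have h := hf.2 hx hy (by norm_num : (0 : ℝ) ≤ 1 / 2) (by norm_num : (0 : ℝ) ≤ 1 / 2) (by norm_num)
  simp only [smul_eq_mul] at h
  rw [show 1 / 2 * x + 1 / 2 * y = (x + y) / 2 by ring] at h
  linarith

end OpenConvex

namespace PsiN

noncomputable def ell (n x : ℝ) : ℝ := 3 - log n - 2 * log x

noncomputable def invSqrtEll (n x : ℝ) : ℝ := (√(ell n x))⁻¹

variable {n x y : ℝ}

theorem ell_eq_log (hn : 0 < n) (hx : 0 < x) : ell n x = log (exp 1 ^ 3 / (n * x ^ 2)) := by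
  rw [log_div (by positivity) (by positivity), log_mul hn.ne' (by positivity), log_pow, log_pow,
    log_exp, ell]
  push_cast
  ring

theorem three_lt_ell (hn : 0 < n) (hx : x ∈ Ioo 0 (1 / √n)) : 3 < ell n x := by
  have hlog : log x < log (1 / √n) := log_lt_log hx.1 hx.2
  rw [one_div, log_inv, log_sqrt hn.le] at hlog
  rw [ell]
  linarith

theorem ell_pos (hn : 0 < n) (hx : x ∈ Ioo 0 (1 / √n)) : 0 < ell n x :=
  three_pos.trans (three_lt_ell hn hx)

theorem ell_le_ell (hx : 0 < x) (hxy : x ≤ y) : ell n y ≤ ell n x := by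
  have := log_le_log hx hxy
  rw [ell, ell]
  linarith

theorem hasDerivAt_ell (hx : 0 < x) : HasDerivAt (ell n) (-2 / x) x := by
  refine (((hasDerivAt_log hx.ne').const_mul 2).const_sub (3 - log n)).congr_deriv ?_
  ring

theorem invSqrtEll_pos (hl : 0 < ell n x) : 0 < invSqrtEll n x :=
  inv_pos.2 (sqrt_pos.2 hl)

theorem invSqrtEll_sq (hl : 0 ≤ ell n x) : invSqrtEll n x ^ 2 = (ell n x)⁻¹ := by
  rw [invSqrtEll, inv_pow, sq_sqrt hl]

theorem invSqrtEll_le_invSqrtEll (hx : 0 < x) (hy : 0 < ell n y) (hxy : x ≤ y) :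
    invSqrtEll n x ≤ invSqrtEll n y :=
  inv_anti₀ (sqrt_pos.2 hy) (sqrt_le_sqrt (ell_le_ell hx hxy))

theorem hasDerivAt_invSqrtEll (hx : 0 < x) (hl : 0 < ell n x) :
    HasDerivAt (invSqrtEll n) (invSqrtEll n x ^ 3 / x) x := by
  have hs : 0 < √(ell n x) := sqrt_pos.2 hl
  refine (((hasDerivAt_ell hx).sqrt hl.ne').inv hs.ne').congr_deriv ?_
  rw [invSqrtEll]
  field_simp

theorem hasDerivAt_div_invSqrtEll_pow_three (hx : 0 < x) (hl : 0 < ell n x) :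
    HasDerivAt (fun y ↦ y / invSqrtEll n y ^ 3)
      ((1 - 3 * invSqrtEll n x ^ 2) / invSqrtEll n x ^ 3) x := by
  have hg := invSqrtEll_pos hl
  refine ((hasDerivAt_id x).div ((hasDerivAt_invSqrtEll hx hl).pow 3)
    (pow_ne_zero 3 hg.ne')).congr_deriv ?_
  simp only [id, Pi.pow_apply]
  field_simp
  ring

theorem monotoneOn_div_invSqrtEll_pow_three (hn : 0 < n) :
    MonotoneOn (fun x ↦ x / invSqrtEll n x ^ 3) (Ioo 0 (1 / √n)) := by
  refine monotoneOn_of_hasDerivAt_nonneg isOpen_Ioo (convex_Ioo _ _)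
    (fun x hx ↦ hasDerivAt_div_invSqrtEll_pow_three hx.1 (ell_pos hn hx))
    fun x hx ↦ ?_
  have hl := three_lt_ell hn hx
  have hg := invSqrtEll_pos (three_pos.trans hl)
  have h3 : 3 * invSqrtEll n x ^ 2 ≤ 1 := by
    rw [invSqrtEll_sq (by linarith), ← div_eq_mul_inv, div_le_one (by linarith)]
    exact hl.le
  exact div_nonneg (by linarith) (by positivity)

theorem concaveOn_invSqrtEll (hn : 0 < n) : ConcaveOn ℝ (Ioo 0 (1 / √n)) (invSqrtEll n) := by
  refine AntitoneOn.concaveOn_of_hasDerivAt isOpen_Ioo (convex_Ioo _ _)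
    (fun x hx ↦ hasDerivAt_invSqrtEll hx.1 (ell_pos hn hx))
    fun x hx y hy hxy ↦ ?_
  have hgx := invSqrtEll_pos (ell_pos hn hx)
  rw [← inv_div y, ← inv_div x]
  exact inv_anti₀ (div_pos hx.1 (by positivity)) (monotoneOn_div_invSqrtEll_pow_three hn hx hy hxy)

theorem monotoneOn_div_invSqrtEll (hn : 0 < n) :
    MonotoneOn (fun x ↦ x / invSqrtEll n x) (Ioo 0 (1 / √n)) := by
  intro x hx y hy hxy
  have hgx := invSqrtEll_pos (ell_pos hn hx)
  have hgy := invSqrtEll_pos (ell_pos hn hy)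
  have hg := invSqrtEll_le_invSqrtEll hx.1 (ell_pos hn hy) hxy
  calc x / invSqrtEll n x = x / invSqrtEll n x ^ 3 * invSqrtEll n x ^ 2 := by field_simp
    _ ≤ y / invSqrtEll n y ^ 3 * invSqrtEll n y ^ 2 :=
      mul_le_mul (monotoneOn_div_invSqrtEll_pow_three hn hx hy hxy)
        (pow_le_pow_left₀ hgx.le hg 2) (sq_nonneg _) (div_nonneg hy.1.le (by positivity))
    _ = y / invSqrtEll n y := by field_simp

end PsiN

open PsiN

section

variable {n : ℕ} {x u v : ℝ}

theorem psiN_eq_mul_invSqrtEll (hn : 0 < n) (hx : 0 < x) : psiN n x = x * invSqrtEll n x := by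
  rw [psiN, ← ell_eq_log (Nat.cast_pos.2 hn) hx, div_eq_mul_inv, invSqrtEll]

theorem hasDerivAt_psiN (hn : 0 < n) (hx : x ∈ Ioo 0 (1 / √n)) :
    HasDerivAt (psiN n) (invSqrtEll n x + invSqrtEll n x ^ 3) x := by
  have h := (hasDerivAt_id x).mul
    (hasDerivAt_invSqrtEll hx.1 (ell_pos (Nat.cast_pos.2 hn) hx))
  refine (h.congr_deriv ?_).congr_of_eventuallyEq ?_
  · simp only [id]
    field_simp [hx.1.ne']
  · filter_upwards [Ioi_mem_nhds hx.1] with y hy using psiN_eq_mul_invSqrtEll hn hy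

theorem strictMonoOn_psiN (hn : 0 < n) : StrictMonoOn (psiN n) (Ioo 0 (1 / √n)) :=
  strictMonoOn_of_hasDerivAt_pos isOpen_Ioo (convex_Ioo _ _) (fun _ hx ↦ hasDerivAt_psiN hn hx)
    fun _ hx ↦ by
      have := invSqrtEll_pos (ell_pos (Nat.cast_pos.2 hn) hx)
      positivity

theorem convexOn_psiN (hn : 0 < n) : ConvexOn ℝ (Ioo 0 (1 / √n)) (psiN n) := by
  refine MonotoneOn.convexOn_of_hasDerivAt isOpen_Ioo (convex_Ioo _ _)
    (fun _ hx ↦ hasDerivAt_psiN hn hx) fun x hx y hy hxy ↦ ?_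
  have hgx := invSqrtEll_pos (ell_pos (Nat.cast_pos.2 hn) hx)
  have hg := invSqrtEll_le_invSqrtEll hx.1 (ell_pos (Nat.cast_pos.2 hn) hy) hxy
  exact add_le_add hg (pow_le_pow_left₀ hgx.le hg 3)

theorem psiN_le_psiN_add_two_mul_invSqrtEll (hn : 0 < n) (hu : 0 < u) (huv : u ≤ v)
    (hv : v < 1 / √n) :
    psiN n v ≤ psiN n u + 2 * (v - u) * invSqrtEll n ((v + u) / 2) := by
  have hn' : (0 : ℝ) < n := Nat.cast_pos.2 hn
  have hu' : u ∈ Ioo 0 (1 / √n) := ⟨hu, huv.trans_lt hv⟩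
  have hv' : v ∈ Ioo 0 (1 / √n) := ⟨hu.trans_le huv, hv⟩
  have hgu := invSqrtEll_pos (ell_pos hn' hu')
  have hgv := invSqrtEll_pos (ell_pos hn' hv')
  have cross : u * invSqrtEll n v ≤ v * invSqrtEll n u := by
    have := monotoneOn_div_invSqrtEll hn' hu' hv' huv
    rwa [div_le_div_iff₀ hgu hgv] at this
  have concave := (concaveOn_invSqrtEll hn').add_le_two_mul_map_half_add hv' hu'
  rw [psiN_eq_mul_invSqrtEll hn hu, psiN_eq_mul_invSqrtEll hn hv'.1]
  linarith [mul_le_mul_of_nonneg_left concave (sub_nonneg.2 huv)]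

end

theorem psiN_increasing_convex_general (n : ℕ) :
    StrictMonoOn (psiN n) (Set.Ioo (0 : ℝ) (1 / Real.sqrt n)) ∧
    ConvexOn ℝ (Set.Ioo (0 : ℝ) (1 / Real.sqrt n)) (psiN n) ∧
    ∀ u v : ℝ, 0 < u → u ≤ v → v < 1 / Real.sqrt n →
      psiN n v ≤ psiN n u + 2 * (v - u) /
        Real.sqrt (Real.log (Real.exp 1 ^ 3 / ((n : ℝ) * ((v + u) / 2) ^ 2))) := by
  rcases Nat.eq_zero_or_pos n with rfl | hn
  · -- `1 / √0 = 0`, so the interval is empty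
    simp only [CharP.cast_eq_zero, sqrt_zero, div_zero, Ioo_self]
    exact ⟨fun _ h ↦ h.elim, ⟨convex_empty, fun _ h ↦ h.elim⟩, fun u v hu huv hv ↦ by linarith⟩
  refine ⟨strictMonoOn_psiN hn, convexOn_psiN hn, fun u v hu huv hv ↦ ?_⟩
  have h := psiN_le_psiN_add_two_mul_invSqrtEll hn hu huv hv
  rwa [invSqrtEll, ← div_eq_mul_inv, ell_eq_log (Nat.cast_pos.2 hn) (by linarith)] at h

/-- For `n ≥ 1`, `ψ_n` is increasing and convex on `(0, 1/√n)`, and for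
`0 < u ≤ v < 1/√n`, `ψ_n(v) ≤ ψ_n(u) + 2(v−u)/√(log(e³/(n·((v+u)/2)²)))`. -/
theorem psiN_increasing_convex (n : ℕ) (hn : 1 ≤ n) :
    StrictMonoOn (psiN n) (Set.Ioo (0 : ℝ) (1 / Real.sqrt n)) ∧
    ConvexOn ℝ (Set.Ioo (0 : ℝ) (1 / Real.sqrt n)) (psiN n) ∧
    ∀ u v : ℝ, 0 < u → u ≤ v → v < 1 / Real.sqrt n →
      psiN n v ≤ psiN n u + 2 * (v - u) /
        Real.sqrt (Real.log (Real.exp 1 ^ 3 / ((n : ℝ) * ((v + u) / 2) ^ 2))) :=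
  psiN_increasing_convex_general n
end

section
/- The function ψ(x) = x / √(log(e²/x)) is increasing and convex on the interval (0,1), and for all 0 < u ≤ v < 1 it satisfies ψ(v) ≤ ψ(u) + 1.5(v − u) / √(log(e² / ((v+u)/2))). -/
/-!
With `s = √(2 - log x)` one computes `ψ' = 1/s + 1/(2 s³)`, which is positive and, since `s`
decreases in `x`, increasing on `(0, e²)`; so `ψ` is increasing and convex there. By convexity
`ψ v - ψ u ≤ ψ'(v) (v - u)`, and for `v < 1` we have `s(v)² ≥ 2`, whence
`ψ'(v) ≤ 5 / (4 s(v))`. Finally, as `(u+v)/2 ≥ v/2`, passing from `v` to the midpoint raises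
`s²` by at most `log 2 < 11/25 · s(v)²`, so
`5 s((u+v)/2) ≤ 6 s(v)`, which turns `5/4` into `3/2`.
-/

/-- `ψ(x) = x / √(log(e²/x))`. -/
noncomputable def psi (x : ℝ) : ℝ := x / Real.sqrt (Real.log (Real.exp 1 ^ 2 / x))

open Real Set

lemma log_exp_one_sq_div {x : ℝ} (hx : 0 < x) : log (exp 1 ^ 2 / x) = 2 - log x := by
  rw [log_div (by positivity) hx.ne', log_pow, log_exp]
  norm_num

lemma psi_eq_div_sqrt {x : ℝ} (hx : 0 < x) : psi x = x / √(2 - log x) := by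
  rw [psi, log_exp_one_sq_div hx]

lemma two_sub_log_pos {x : ℝ} (hx : x ∈ Ioo 0 (exp 2)) : 0 < 2 - log x := by
  linarith [(log_lt_iff_lt_exp hx.1).2 hx.2]

lemma two_le_two_sub_log {x : ℝ} (h0 : 0 < x) (h1 : x ≤ 1) : 2 ≤ 2 - log x := by
  linarith [log_nonpos h0.le h1]

lemma Ioc_zero_one_subset_Ioo_zero_exp_two : Ioc (0 : ℝ) 1 ⊆ Ioo 0 (exp 2) :=
  Ioc_subset_Ioo_right (one_lt_exp_iff.2 two_pos)

noncomputable def psiDeriv (x : ℝ) : ℝ := (√(2 - log x))⁻¹ + (2 * √(2 - log x) ^ 3)⁻¹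

lemma hasDerivAt_psi {x : ℝ} (hx : x ∈ Ioo 0 (exp 2)) : HasDerivAt psi (psiDeriv x) x := by
  have hL := two_sub_log_pos hx
  have hs : 0 < √(2 - log x) := sqrt_pos.2 hL
  have hsqrt : HasDerivAt (fun y => √(2 - log y)) (-x⁻¹ / (2 * √(2 - log x))) x := by
    simpa using ((hasDerivAt_const x 2).sub (hasDerivAt_log hx.1.ne')).sqrt hL.ne'
  have hpsi : psi =ᶠ[nhds x] fun y => y / √(2 - log y) := by
    filter_upwards [Ioi_mem_nhds hx.1] with y hy
    exact psi_eq_div_sqrt hy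
  refine (((hasDerivAt_id' x).div hsqrt hs.ne').congr_of_eventuallyEq hpsi).congr_deriv ?_
  have hx0 : x ≠ 0 := hx.1.ne'
  rw [psiDeriv]
  field_simp
  ring

lemma psiDeriv_pos {x : ℝ} (hx : x ∈ Ioo 0 (exp 2)) : 0 < psiDeriv x := by
  have : 0 < √(2 - log x) := sqrt_pos.2 (two_sub_log_pos hx)
  unfold psiDeriv
  positivity

lemma monotoneOn_psiDeriv : MonotoneOn psiDeriv (Ioo 0 (exp 2)) := by
  intro x hx y hy hxy
  have hsy : 0 < √(2 - log y) := sqrt_pos.2 (two_sub_log_pos hy)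
  have hs : √(2 - log y) ≤ √(2 - log x) :=
    sqrt_le_sqrt (by linarith [log_le_log hx.1 hxy])
  unfold psiDeriv
  gcongr

lemma strictMonoOn_psi : StrictMonoOn psi (Ioo 0 (exp 2)) :=
  strictMonoOn_of_hasDerivWithinAt_pos (convex_Ioo 0 _)
    (fun _ hx => (hasDerivAt_psi hx).continuousAt.continuousWithinAt)
    (fun _ hx => (hasDerivAt_psi (interior_subset hx)).hasDerivWithinAt)
    (fun _ hx => psiDeriv_pos (interior_subset hx))

lemma convexOn_psi : ConvexOn ℝ (Ioo 0 (exp 2)) psi := by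
  refine MonotoneOn.convexOn_of_deriv (convex_Ioo 0 _)
    (fun x hx => (hasDerivAt_psi hx).continuousAt.continuousWithinAt) ?_ ?_ <;>
    rw [interior_Ioo]
  · exact fun x hx => (hasDerivAt_psi hx).differentiableAt.differentiableWithinAt
  · exact monotoneOn_psiDeriv.congr fun x hx => ((hasDerivAt_psi hx).deriv).symm

lemma inv_add_inv_two_mul_pow_three_le {s : ℝ} (hs : 0 < s) (hs2 : 2 ≤ s ^ 2) :
    s⁻¹ + (2 * s ^ 3)⁻¹ ≤ 5 / 4 / s := by
  have hdiff : 5 / 4 / s - (s⁻¹ + (2 * s ^ 3)⁻¹) = (s ^ 2 - 2) / (4 * s ^ 3) := by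
    field_simp
    ring
  rw [← sub_nonneg, hdiff]
  exact div_nonneg (by linarith) (by positivity)

lemma psiDeriv_le {x : ℝ} (h0 : 0 < x) (h1 : x ≤ 1) :
    psiDeriv x ≤ 5 / 4 / √(2 - log x) := by
  have h2 := two_le_two_sub_log h0 h1
  refine inv_add_inv_two_mul_pow_three_le (sqrt_pos.2 (by linarith)) ?_
  rwa [sq_sqrt (by linarith)]

lemma psi_sub_le {u v : ℝ} (hu : 0 < u) (huv : u ≤ v) (hv : v ≤ 1) :
    psi v - psi u ≤ 5 / 4 * (v - u) / √(2 - log v) := by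
  rcases huv.eq_or_lt with rfl | huv
  · simp
  have hslope := convexOn_psi.slope_le_of_hasDerivAt
    (Ioc_zero_one_subset_Ioo_zero_exp_two ⟨hu, huv.le.trans hv⟩)
    (Ioc_zero_one_subset_Ioo_zero_exp_two ⟨hu.trans huv, hv⟩) huv
    (hasDerivAt_psi (Ioc_zero_one_subset_Ioo_zero_exp_two ⟨hu.trans huv, hv⟩))
  rw [slope_def_field, div_le_iff₀ (sub_pos.2 huv)] at hslope
  calc psi v - psi u ≤ psiDeriv v * (v - u) := hslope
    _ ≤ 5 / 4 / √(2 - log v) * (v - u) :=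
      mul_le_mul_of_nonneg_right (psiDeriv_le (hu.trans huv) hv) (sub_nonneg.2 huv.le)
    _ = 5 / 4 * (v - u) / √(2 - log v) := by ring

lemma five_mul_sqrt_two_sub_log_le {m v : ℝ} (hv0 : 0 < v) (hv1 : v ≤ 1) (hm : v / 2 ≤ m)
    (hmv : m ≤ v) :
    5 * √(2 - log m) ≤ 6 * √(2 - log v) := by
  have h2 := two_le_two_sub_log hv0 hv1
  have hlog : log v - log 2 ≤ log m := by
    rw [← log_div hv0.ne' two_ne_zero]
    exact log_le_log (by positivity) hm
  have hlogm : log m ≤ log v := log_le_log (by linarith) hmv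
  have hlog2 := log_two_lt_d9
  have hsq : 25 * √(2 - log m) ^ 2 ≤ 36 * √(2 - log v) ^ 2 := by
    rw [sq_sqrt (by linarith), sq_sqrt (by linarith)]
    linarith
  nlinarith [sqrt_nonneg (2 - log m), sqrt_nonneg (2 - log v)]

/-- `ψ` is increasing and convex on `(0,1)`, and for `0 < u ≤ v < 1`,
`ψ(v) ≤ ψ(u) + 1.5(v−u)/√(log(e²/((v+u)/2)))`. -/
theorem psi_increasing_convex :
    StrictMonoOn psi (Set.Ioo (0 : ℝ) 1) ∧
    ConvexOn ℝ (Set.Ioo (0 : ℝ) 1) psi ∧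
    ∀ u v : ℝ, 0 < u → u ≤ v → v < 1 →
      psi v ≤ psi u + 1.5 * (v - u) /
        Real.sqrt (Real.log (Real.exp 1 ^ 2 / ((v + u) / 2))) := by
  have hsub : Ioo (0 : ℝ) 1 ⊆ Ioo 0 (exp 2) :=
    Ioo_subset_Ioc_self.trans Ioc_zero_one_subset_Ioo_zero_exp_two
  refine ⟨strictMonoOn_psi.mono hsub, convexOn_psi.subset hsub (convex_Ioo 0 1), ?_⟩
  intro u v hu huv hv
  have hv0 := hu.trans_le huv
  have hm : 0 < (v + u) / 2 := by positivity
  have hc : 0 < √(2 - log ((v + u) / 2)) := sqrt_pos.2 (by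
    linarith [two_le_two_sub_log hm (by linarith)])
  rw [log_exp_one_sq_div hm]
  calc psi v ≤ psi u + 5 / 4 * (v - u) / √(2 - log v) := by
        linarith [psi_sub_le hu huv hv.le]
    _ ≤ psi u + 1.5 * (v - u) / √(2 - log ((v + u) / 2)) := by
        have hb : 0 < √(2 - log v) := sqrt_pos.2 (by linarith [two_le_two_sub_log hv0 hv.le])
        have hcb := five_mul_sqrt_two_sub_log_le (m := (v + u) / 2) hv0 hv.le
          (by linarith) (by linarith)
        rw [add_le_add_iff_left, div_le_div_iff₀ hb hc]
        nlinarith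
end

section
/- There exists an absolute constant c > 0 such that for every n and every function f : {0,1}^n → [-1,1] with 0 < E[|f|] ≤ 1/2, one has Σ_{i=1}^n f̂({i})² ≤ c · E[|f|]² · log(e / E[|f|]). -/
open Finset

/-- Influence of coordinate `k` on `f`: `I_k(f) = E|f(x) − f(x ⊕ e_k)|`. -/
noncomputable def infl (n : ℕ) (f : (Fin n → Bool) → ℝ) (k : Fin n) : ℝ :=
  expect n (fun x => |f x - f (flipBit n x k)|)

-- helper lemmas
lemma expect_mono {n : ℕ} {f g : (Fin n → Bool) → ℝ} (h : ∀ x, f x ≤ g x) :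
    expect n f ≤ expect n g := by
  unfold _root_.expect
  gcongr with x
  exact h x

lemma expect_add {n : ℕ} (f g : (Fin n → Bool) → ℝ) :
    expect n (fun x => f x + g x) = expect n f + expect n g := by
  unfold _root_.expect; rw [Finset.sum_add_distrib, add_div]

lemma expect_const_mul {n : ℕ} (c : ℝ) (f : (Fin n → Bool) → ℝ) :
    expect n (fun x => c * f x) = c * expect n f := by
  unfold _root_.expect; rw [← Finset.mul_sum, mul_div_assoc]

lemma expect_sum_comm {n : ℕ} (F : Fin n → (Fin n → Bool) → ℝ) :
    expect n (fun x => ∑ i : Fin n, F i x) = ∑ i : Fin n, expect n (F i) := by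
  unfold _root_.expect; rw [Finset.sum_comm, Finset.sum_div]

lemma expect_factor {n : ℕ} (h : Fin n → Bool → ℝ) :
    expect n (fun x => ∏ i : Fin n, h i (x i)) = ∏ i : Fin n, ((h i false + h i true) / 2) := by
  unfold _root_.expect
  rw [← Fintype.prod_sum h, Finset.prod_div_distrib, Finset.prod_const]
  simp [Fintype.sum_bool, add_comm]

lemma chi_singleton {n : ℕ} (i : Fin n) (x : Fin n → Bool) :
    chi n {i} x = if x i then (-1 : ℝ) else 1 := by
  simp [chi]

section main
variable {n : ℕ} (f : (Fin n → Bool) → ℝ)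

noncomputable def gfun (n : ℕ) (f : (Fin n → Bool) → ℝ) (x : Fin n → Bool) : ℝ :=
  ∑ i : Fin n, coef n f {i} * chi n {i} x

lemma expect_f_g : expect n (fun x => f x * gfun n f x) = ∑ i : Fin n, (coef n f {i}) ^ 2 := by
  have : (fun x => f x * gfun n f x)
      = fun x => ∑ i : Fin n, coef n f {i} * (f x * chi n {i} x) := by
    funext x; unfold gfun; rw [Finset.mul_sum]; congr 1; funext i; ring
  rw [this, expect_sum_comm]
  congr 1; funext i
  rw [expect_const_mul]
  rw [show expect n (fun x => f x * chi n {i} x) = coef n f {i} from rfl]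
  ring

lemma mgf_bound (l : ℝ) :
    expect n (fun x => Real.exp (l * gfun n f x))
      ≤ Real.exp (l ^ 2 * (∑ i : Fin n, (coef n f {i}) ^ 2) / 2) := by
  have h1 : (fun x => Real.exp (l * gfun n f x))
      = fun x => ∏ i : Fin n, Real.exp ((l * coef n f {i}) * (if x i then (-1:ℝ) else 1)) := by
    funext x
    rw [← Real.exp_sum]
    congr 1
    unfold gfun
    rw [Finset.mul_sum]
    congr 1; funext i; rw [chi_singleton]; ring
  rw [h1, expect_factor (fun i b => Real.exp ((l * coef n f {i}) * (if b then (-1:ℝ) else 1)))]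
  calc ∏ i : Fin n, ((Real.exp ((l * coef n f {i}) * 1)
          + Real.exp ((l * coef n f {i}) * (-1))) / 2)
      = ∏ i : Fin n, Real.cosh (l * coef n f {i}) := by
        congr 1; funext i; rw [Real.cosh_eq]; ring_nf
    _ ≤ ∏ i : Fin n, Real.exp ((l * coef n f {i}) ^ 2 / 2) := by
        apply Finset.prod_le_prod
        · intro i _; positivity
        · intro i _; exact Real.cosh_le_exp_half_sq _
    _ = Real.exp (∑ i : Fin n, (l * coef n f {i}) ^ 2 / 2) := by rw [Real.exp_sum]
    _ = Real.exp (l ^ 2 * (∑ i : Fin n, (coef n f {i}) ^ 2) / 2) := by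
        congr 1; rw [Finset.mul_sum, Finset.sum_div]; congr 1; funext i; ring

end main


set_option maxHeartbeats 2000000 in
/-- Talagrand's first-level bound (after Chang): for `f : {0,1}^n → [-1,1]` with
`0 < E|f| ≤ 1/2`, `Σᵢ f̂({i})² ≤ c·E[|f|]²·log(e/E[|f|])`. -/
theorem first_level_bound :
    ∃ c : ℝ, 0 < c ∧ ∀ (n : ℕ) (f : (Fin n → Bool) → ℝ),
      (∀ x, f x ∈ Set.Icc (-1 : ℝ) 1) →
      0 < expect n (fun x => |f x|) → expect n (fun x => |f x|) ≤ 1 / 2 →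
      ∑ i : Fin n, (coef n f {i}) ^ 2 ≤
        c * (expect n (fun x => |f x|)) ^ 2 *
          Real.log (Real.exp 1 / expect n (fun x => |f x|)) := by
  refine ⟨8, by norm_num, ?_⟩
  intro n f hf ha0 ha
  set a := expect n (fun x => |f x|) with hadef
  set W := ∑ i : Fin n, (coef n f {i}) ^ 2 with hWdef
  have hfb : ∀ x, |f x| ≤ 1 := fun x => abs_le.mpr ⟨(hf x).1, (hf x).2⟩
  have hea : 0 < Real.exp 1 / a := by positivity
  set L := Real.log (Real.exp 1 / a) with hLdef
  have hL1 : 1 ≤ L := by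
    rw [hLdef, Real.le_log_iff_exp_le hea, le_div_iff₀ ha0]
    nlinarith [Real.exp_pos 1]
  have hW0 : 0 ≤ W := Finset.sum_nonneg fun i _ => sq_nonneg _
  rcases eq_or_lt_of_le hW0 with hW | hW
  · nlinarith [pow_pos ha0 2]
  -- main case
  set s := Real.sqrt W with hsdef
  set K := Real.sqrt (2 * L) with hKdef
  have hs : 0 < s := Real.sqrt_pos.mpr hW
  have hss : s * s = W := Real.mul_self_sqrt hW0
  have hK2 : K ^ 2 = 2 * L := Real.sq_sqrt (by linarith)
  have hK0 : 0 ≤ K := Real.sqrt_nonneg _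
  have hK1 : 1 ≤ K := by nlinarith [sq_nonneg (K - 1)]
  have hKpos : 0 < K := lt_of_lt_of_le one_pos hK1
  set l := K / s with hldef
  set t := K * s with htdef
  have hl : 0 < l := div_pos hKpos hs
  -- pointwise inequality
  have key : ∀ x, f x * gfun n f x ≤ t * |f x| +
      (Real.exp (l * (gfun n f x - t)) + Real.exp (l * (-(gfun n f x) - t))) / l := by
    intro x
    have h1 : f x * gfun n f x ≤ |f x| * |gfun n f x| := by
      rw [← abs_mul]; exact le_abs_self _
    have hE1 : 0 < Real.exp (l * (gfun n f x - t)) := Real.exp_pos _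
    have hE2 : 0 < Real.exp (l * (-(gfun n f x) - t)) := Real.exp_pos _
    rcases le_or_gt (|gfun n f x|) t with hgt | hgt
    · have h2 : |f x| * |gfun n f x| ≤ t * |f x| := by
        rw [mul_comm t]
        exact mul_le_mul_of_nonneg_left hgt (abs_nonneg _)
      have hpos : 0 ≤ (Real.exp (l * (gfun n f x - t)) +
          Real.exp (l * (-(gfun n f x) - t))) / l := by positivity
      linarith
    · have hgabs : Real.exp (l * (|gfun n f x| - t)) ≤
          Real.exp (l * (gfun n f x - t)) + Real.exp (l * (-(gfun n f x) - t)) := by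
        rcases le_or_gt 0 (gfun n f x) with h0 | h0
        · rw [abs_of_nonneg h0]; linarith
        · rw [abs_of_neg h0]; linarith
      have h2 : |gfun n f x| - t ≤ Real.exp (l * (|gfun n f x| - t)) / l := by
        rw [le_div_iff₀ hl]
        nlinarith [Real.add_one_le_exp (l * (|gfun n f x| - t))]
      have h3 : |f x| * |gfun n f x| ≤ t * |f x| + (|gfun n f x| - t) := by
        nlinarith [abs_nonneg (f x), hfb x]
      have h4 : Real.exp (l * (|gfun n f x| - t)) / l ≤
          (Real.exp (l * (gfun n f x - t)) + Real.exp (l * (-(gfun n f x) - t))) / l := by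
        gcongr
      linarith
  -- take expectations
  have hmono := expect_mono key
  rw [expect_f_g] at hmono
  have hsplit : expect n (fun x => t * |f x| +
      (Real.exp (l * (gfun n f x - t)) + Real.exp (l * (-(gfun n f x) - t))) / l)
      = t * a + (expect n (fun x => Real.exp (l * (gfun n f x - t)))
          + expect n (fun x => Real.exp (l * (-(gfun n f x) - t)))) / l := by
    rw [expect_add (fun x => t * |f x|)
        (fun x => (Real.exp (l * (gfun n f x - t)) + Real.exp (l * (-(gfun n f x) - t))) / l),
      expect_const_mul]
    congr 1
    have heq : (fun x => (Real.exp (l * (gfun n f x - t)) +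
        Real.exp (l * (-(gfun n f x) - t))) / l)
        = fun x => l⁻¹ * (Real.exp (l * (gfun n f x - t)) +
            Real.exp (l * (-(gfun n f x) - t))) := by
      funext x; ring
    rw [heq, expect_const_mul, expect_add (fun x => Real.exp (l * (gfun n f x - t)))
      (fun x => Real.exp (l * (-(gfun n f x) - t)))]
    ring
  rw [hsplit] at hmono
  -- MGF bounds
  have hE1 : expect n (fun x => Real.exp (l * (gfun n f x - t)))
      ≤ Real.exp (l ^ 2 * W / 2) * Real.exp (-(l * t)) := by
    have heq : (fun x => Real.exp (l * (gfun n f x - t)))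
        = fun x => Real.exp (-(l * t)) * Real.exp (l * gfun n f x) := by
      funext x; rw [← Real.exp_add]; ring_nf
    rw [heq, expect_const_mul, mul_comm]
    exact mul_le_mul_of_nonneg_right (mgf_bound f l) (Real.exp_pos _).le
  have hE2 : expect n (fun x => Real.exp (l * (-(gfun n f x) - t)))
      ≤ Real.exp (l ^ 2 * W / 2) * Real.exp (-(l * t)) := by
    have heq : (fun x => Real.exp (l * (-(gfun n f x) - t)))
        = fun x => Real.exp (-(l * t)) * Real.exp ((-l) * gfun n f x) := by
      funext x; rw [← Real.exp_add]; ring_nf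
    rw [heq, expect_const_mul, mul_comm]
    have hm := mgf_bound f (-l)
    rw [show ((-l : ℝ)) ^ 2 = l ^ 2 by ring] at hm
    exact mul_le_mul_of_nonneg_right hm (Real.exp_pos _).le
  -- simplify the exponent
  have hls : l * s = K := by
    rw [hldef]; exact div_mul_cancel₀ K hs.ne'
  have hlt : l * t = K ^ 2 := by
    rw [htdef, show l * (K * s) = (l * s) * K by ring, hls]; ring
  have hl2W : l ^ 2 * W / 2 = K ^ 2 / 2 := by
    rw [← hss, show l ^ 2 * (s * s) = (l * s) * (l * s) by ring, hls]; ring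
  have hexp : Real.exp (l ^ 2 * W / 2) * Real.exp (-(l * t)) = a / Real.exp 1 := by
    rw [← Real.exp_add, hl2W, hlt, show K ^ 2 / 2 + -(K ^ 2) = -(K ^ 2 / 2) by ring,
      hK2, show -(2 * L / 2) = -L by ring, hLdef, Real.exp_neg, Real.exp_log hea, inv_div]
  rw [hexp] at hE1 hE2
  set E1 := expect n (fun x => Real.exp (l * (gfun n f x - t))) with hE1def
  set E2 := expect n (fun x => Real.exp (l * (-(gfun n f x) - t))) with hE2def
  clear key hsplit hexp hE1def hE2def
  clear_value E1 E2
  -- combine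
  have hcomb : W ≤ t * a + (2 * (a / Real.exp 1)) / l := by
    have h9 : (E1 + E2) / l ≤ (2 * (a / Real.exp 1)) / l :=
      div_le_div_of_nonneg_right (by linarith only [hE1, hE2]) hl.le
    linarith only [hmono, h9]
  have h2e : (2 : ℝ) ≤ Real.exp 1 := by nlinarith [Real.add_one_le_exp (1 : ℝ)]
  have hae : a / Real.exp 1 ≤ a / 2 := div_le_div_of_nonneg_left ha0.le two_pos h2e
  have hdiv : (2 * (a / Real.exp 1)) / l = 2 * (a / Real.exp 1) * (s / K) := by
    rw [hldef, div_div_eq_mul_div, mul_div_assoc]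
  have hsK : s / K ≤ s := div_le_self hs.le hK1
  have hterm : 2 * (a / Real.exp 1) * (s / K) ≤ a * s := by
    have hx : 0 ≤ a / Real.exp 1 := by positivity
    have hy : 0 ≤ s / K := by positivity
    nlinarith [mul_le_mul hae hsK hy (by positivity : (0:ℝ) ≤ a / 2)]
  have hfin : s * s ≤ 2 * K * a * s := by
    have h10 : W ≤ K * s * a + a * s := by
      have h11 : t * a = K * s * a := by rw [htdef]
      linarith only [hcomb, hterm, h11, hdiv]
    nlinarith [hss, mul_pos ha0 hs, h10, hK1]
  have hstep : s ≤ 2 * K * a := le_of_mul_le_mul_right (by linarith [hfin]) hs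
  calc W = s * s := hss.symm
    _ ≤ (2 * K * a) * (2 * K * a) := mul_self_le_mul_self hs.le hstep
    _ = 8 * a ^ 2 * L := by rw [show (2*K*a)*(2*K*a) = 4 * K^2 * a^2 by ring, hK2]; ring
end

section
/- There exists a universal constant c > 0 such that for every n and all increasing functions f, g : {0,1}^n → [0,1] with W_1(f,g) > 0, one has W_1(f,g) / log(e / W_1(f,g)) ≤ c · E'[f] · E'[g], where E'[h] = min(E[h], 1 − E[h]). Consequently, Talagrand's lower bound can be tight for (f,g) only if Cov(f,g) = O(E'[f]·E'[g]). -/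
open Finset

/-- `W_d(f,g) = Σ_{|S|=d} f̂(S) ĝ(S)`. -/
noncomputable def W (n : ℕ) (d : ℕ) (f g : (Fin n → Bool) → ℝ) : ℝ :=
  ∑ S ∈ Finset.univ.filter (fun S : Finset (Fin n) => S.card = d),
    coef n f S * coef n g S

namespace TalAux
variable {n : ℕ}

/-- the ±1 value of coordinate i -/
def c (b : Bool) : ℝ := if b then -1 else 1

lemma chi_singleton (i : Fin n) (x : Fin n → Bool) : chi n {i} x = c (x i) := by
  simp [chi, c]

lemma c_neg (b : Bool) : c (!b) = - c b := by cases b <;> simp [c]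

lemma c_sq (b : Bool) : c b * c b = 1 := by cases b <;> simp [c]

lemma c_abs (b : Bool) : |c b| ≤ 1 := by cases b <;> simp [c]

/-- flipping coordinate i is an involution -/
lemma flip_invol (i : Fin n) :
    Function.Involutive (fun x : Fin n → Bool => Function.update x i (!x i)) := by
  intro x
  funext j
  by_cases h : j = i
  · subst h; simp
  · simp [Function.update_of_ne h]

lemma sum_flip_neg (i : Fin n) (F : (Fin n → Bool) → ℝ)
    (h : ∀ x, F (Function.update x i (!x i)) = - F x) :
    ∑ x : Fin n → Bool, F x = 0 := by
  have h1 : ∑ x : Fin n → Bool, F (Function.update x i (!x i)) = ∑ x : Fin n → Bool, F x :=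
    Function.Bijective.sum_comp (flip_invol i).bijective F
  have h2 : ∑ x : Fin n → Bool, F (Function.update x i (!x i))
      = - ∑ x : Fin n → Bool, F x := by
    rw [← Finset.sum_neg_distrib]
    exact Finset.sum_congr rfl fun x _ => h x
  linarith

lemma sum_c (i : Fin n) : ∑ x : Fin n → Bool, c (x i) = 0 := by
  refine sum_flip_neg i _ fun x => ?_
  rw [Function.update_self, c_neg]

lemma sum_c_mul (i j : Fin n) (hij : i ≠ j) :
    ∑ x : Fin n → Bool, c (x i) * c (x j) = 0 := by
  refine sum_flip_neg i _ fun x => ?_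
  rw [Function.update_self, Function.update_of_ne (Ne.symm hij), c_neg]
  ring


noncomputable def A (n : ℕ) (f : (Fin n → Bool) → ℝ) (i : Fin n) : ℝ := coef n f {i}
noncomputable def ell (n : ℕ) (f : (Fin n → Bool) → ℝ) (x : Fin n → Bool) : ℝ :=
  ∑ i, A n f i * c (x i)
noncomputable def W2 (n : ℕ) (f : (Fin n → Bool) → ℝ) : ℝ := ∑ i, (A n f i) ^ 2

lemma two_pow_pos : (0:ℝ) < 2 ^ n := by positivity

lemma sum_mul_c (f : (Fin n → Bool) → ℝ) (i : Fin n) :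
    ∑ x : Fin n → Bool, f x * c (x i) = 2 ^ n * A n f i := by
  have : A n f i = (∑ x : Fin n → Bool, f x * c (x i)) / 2 ^ n := by
    unfold A coef _root_.expect
    congr 1
    refine Finset.sum_congr rfl fun x _ => ?_
    simp [chi, c]
  rw [this, mul_div_cancel₀]
  positivity

lemma sum_f_ell (f : (Fin n → Bool) → ℝ) :
    ∑ x : Fin n → Bool, f x * ell n f x = 2 ^ n * W2 n f := by
  unfold ell W2
  calc ∑ x : Fin n → Bool, f x * ∑ i, A n f i * c (x i)
      = ∑ x : Fin n → Bool, ∑ i, A n f i * (f x * c (x i)) := by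
        refine Finset.sum_congr rfl fun x _ => ?_
        rw [Finset.mul_sum]
        exact Finset.sum_congr rfl fun i _ => by ring
    _ = ∑ i, A n f i * ∑ x : Fin n → Bool, f x * c (x i) := by
        rw [Finset.sum_comm]
        exact Finset.sum_congr rfl fun i _ => by rw [Finset.mul_sum]
    _ = ∑ i, A n f i * (2 ^ n * A n f i) := by
        exact Finset.sum_congr rfl fun i _ => by rw [sum_mul_c]
    _ = 2 ^ n * ∑ i, (A n f i) ^ 2 := by
        rw [Finset.mul_sum]
        exact Finset.sum_congr rfl fun i _ => by ring

lemma sum_ell (f : (Fin n → Bool) → ℝ) :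
    ∑ x : Fin n → Bool, ell n f x = 0 := by
  unfold ell
  rw [Finset.sum_comm]
  refine Finset.sum_eq_zero fun i _ => ?_
  rw [← Finset.mul_sum, sum_c, mul_zero]

lemma sum_ell_sq (f : (Fin n → Bool) → ℝ) :
    ∑ x : Fin n → Bool, (ell n f x) ^ 2 = 2 ^ n * W2 n f := by
  unfold ell W2
  calc ∑ x : Fin n → Bool, (∑ i, A n f i * c (x i)) ^ 2
      = ∑ x : Fin n → Bool, ∑ i, ∑ j, (A n f i * A n f j) * (c (x i) * c (x j)) := by
        refine Finset.sum_congr rfl fun x _ => ?_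
        rw [sq, Finset.sum_mul_sum]
        exact Finset.sum_congr rfl fun i _ =>
          Finset.sum_congr rfl fun j _ => by ring
    _ = ∑ i, ∑ j, (A n f i * A n f j) * ∑ x : Fin n → Bool, c (x i) * c (x j) := by
        rw [Finset.sum_comm]
        refine Finset.sum_congr rfl fun i _ => ?_
        rw [Finset.sum_comm]
        exact Finset.sum_congr rfl fun j _ => by rw [Finset.mul_sum]
    _ = ∑ i : Fin n, (A n f i * A n f i) * 2 ^ n := by
        refine Finset.sum_congr rfl fun i _ => ?_
        rw [Finset.sum_eq_single i]
        · congr 1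
          calc ∑ x : Fin n → Bool, c (x i) * c (x i)
              = ∑ _x : Fin n → Bool, (1:ℝ) := by
                refine Finset.sum_congr rfl fun x _ => by cases h : x i <;> simp [c]
            _ = 2 ^ n := by
                simp [Finset.card_univ]
        · intro j _ hj
          rw [sum_c_mul i j (Ne.symm hj), mul_zero]
        · intro h; exact absurd (Finset.mem_univ i) h
    _ = 2 ^ n * ∑ i, (A n f i) ^ 2 := by
        rw [Finset.mul_sum]
        exact Finset.sum_congr rfl fun i _ => by ring

set_option maxHeartbeats 1000000 in
lemma mgf (f : (Fin n → Bool) → ℝ) (t : ℝ) :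
    ∑ x : Fin n → Bool, Real.exp (t * ell n f x)
      ≤ 2 ^ n * Real.exp (t ^ 2 * W2 n f / 2) := by
  unfold ell W2
  have hpt : ∀ x : Fin n → Bool, Real.exp (t * ∑ i, A n f i * c (x i))
      = ∏ i, Real.exp (t * A n f i * c (x i)) := by
    intro x
    rw [← Real.exp_sum, Finset.mul_sum]
    ring_nf
  calc ∑ x : Fin n → Bool, Real.exp (t * ∑ i, A n f i * c (x i))
      = ∑ x : Fin n → Bool, ∏ i, Real.exp (t * A n f i * c (x i)) := by
        exact Finset.sum_congr rfl fun x _ => hpt x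
    _ = ∏ i, ∑ b : Bool, Real.exp (t * A n f i * c b) := by
        rw [← Fintype.prod_sum (fun i b => Real.exp (t * A n f i * c b))]
    _ = ∏ i : Fin n, (2 * Real.cosh (t * A n f i)) := by
        refine Finset.prod_congr rfl fun i _ => ?_
        rw [Fintype.sum_bool]
        simp only [c]
        norm_num
        rw [Real.cosh_eq]
        ring
    _ ≤ ∏ i : Fin n, (2 * Real.exp ((t * A n f i) ^ 2 / 2)) := by
        refine Finset.prod_le_prod (fun i _ => by positivity) fun i _ => ?_
        have := Real.cosh_le_exp_half_sq (t * A n f i)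
        nlinarith [Real.cosh_pos (t * A n f i)]
    _ = 2 ^ n * Real.exp (t ^ 2 * (∑ i, (A n f i) ^ 2) / 2) := by
        rw [Finset.prod_mul_distrib, Finset.prod_const, ← Real.exp_sum]
        simp only [Finset.card_univ, Fintype.card_fin]
        congr 1
        rw [Finset.mul_sum, Finset.sum_div]
        exact congrArg Real.exp (Finset.sum_congr rfl fun i _ => by ring)

lemma ptwise (fv lv T t : ℝ) (h0 : 0 ≤ fv) (h1 : fv ≤ 1) (ht : 0 < t) :
    fv * lv ≤ fv * T + Real.exp (t * lv - t * T - 1) / t := by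
  rcases le_or_gt lv T with h | h
  · have h2 : fv * lv ≤ fv * T := by nlinarith
    have h3 : 0 < Real.exp (t * lv - t * T - 1) / t := by positivity
    linarith
  · have hu : t * (lv - T) ≤ Real.exp (t * lv - t * T - 1) := by
      have := Real.add_one_le_exp (t * lv - t * T - 1)
      nlinarith
    have h2 : fv * (lv - T) ≤ lv - T := by nlinarith
    have h3 : lv - T ≤ Real.exp (t * lv - t * T - 1) / t := by
      rw [le_div_iff₀ ht]
      nlinarith
    nlinarith

set_option maxHeartbeats 1000000 in
lemma arith (Wv a : ℝ) (hW0 : 0 ≤ Wv) (ha0 : 0 < a) (ha1 : a ≤ 1)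
    (key : ∀ t T : ℝ, 0 < t → Wv ≤ a * T + Real.exp (t ^ 2 * Wv / 2 - t * T - 1) / t) :
    Wv ≤ 9 * a ^ 2 * Real.log (Real.exp 1 / a) := by
  set L : ℝ := Real.log (Real.exp 1 / a) with hLdef
  have hL : 1 ≤ L := by
    rw [hLdef, Real.log_div (Real.exp_ne_zero 1) (ne_of_gt ha0), Real.log_exp]
    have : Real.log a ≤ 0 := Real.log_nonpos (le_of_lt ha0) ha1
    linarith
  have hexpL : Real.exp L = Real.exp 1 / a := Real.exp_log (by positivity)
  rcases eq_or_lt_of_le hW0 with hW | hW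
  · rw [← hW]; positivity
  · suffices h : Wv ≤ 9 * a ^ 2 * L by exact h
    clear_value L
    clear hLdef
    obtain ⟨σ, hσ, hσ2⟩ : ∃ σ : ℝ, 0 < σ ∧ σ ^ 2 = Wv :=
      ⟨Real.sqrt Wv, Real.sqrt_pos.2 hW, Real.sq_sqrt hW0⟩
    obtain ⟨r, hr1, hr2⟩ : ∃ r : ℝ, 1 ≤ r ∧ r ^ 2 = L :=
      ⟨Real.sqrt L, by nlinarith [Real.sqrt_nonneg L, Real.sq_sqrt (by linarith : (0:ℝ) ≤ L)],
        Real.sq_sqrt (by linarith)⟩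
    set s : ℝ := 2 * r with hsdef
    have hs2 : 2 ≤ s := by rw [hsdef]; linarith
    have hs0 : 0 < s := by linarith
    have hs2L : s ^ 2 = 4 * L := by rw [hsdef]; nlinarith
    have hkey := key (s / σ) (s * σ) (by positivity)
    have hexp : (s / σ) ^ 2 * Wv / 2 - s / σ * (s * σ) - 1 = -(s ^ 2 / 2) - 1 := by
      rw [← hσ2]
      field_simp
      ring
    rw [hexp] at hkey
    have hee : Real.exp 1 * Real.exp 1 = Real.exp 2 := by
      rw [← Real.exp_add]; norm_num
    have hexpval : Real.exp (-(s ^ 2 / 2) - 1) ≤ a ^ 2 / Real.exp 2 := by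
      have h1 : Real.exp (-(s ^ 2 / 2) - 1) ≤ Real.exp (-(2 * L)) := by
        apply Real.exp_le_exp.2
        nlinarith
      have h2 : Real.exp (-(2 * L)) = a ^ 2 / Real.exp 2 := by
        rw [show -(2 * L) = -L + -L by ring, Real.exp_add, Real.exp_neg, hexpL]
        rw [← hee]
        field_simp [Real.exp_ne_zero]
      linarith
    have hdiv : Real.exp (-(s ^ 2 / 2) - 1) / (s / σ) ≤ (a ^ 2 / Real.exp 2) * (σ / s) := by
      rw [div_div_eq_mul_div, div_le_iff₀ hs0]
      calc Real.exp (-(s ^ 2 / 2) - 1) * σ ≤ (a ^ 2 / Real.exp 2) * σ :=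
            mul_le_mul_of_nonneg_right hexpval (le_of_lt hσ)
        _ = (a ^ 2 / Real.exp 2) * (σ / s) * s := by field_simp
    have hW2 : Wv ≤ a * (s * σ) + (a ^ 2 / Real.exp 2) * (σ / s) := le_trans hkey (by linarith)
    have he : (7:ℝ) ≤ Real.exp 2 := by
      nlinarith [Real.exp_one_gt_d9, hee]
    have hσineq : σ ≤ a * s + a ^ 2 / (Real.exp 2 * s) := by
      have e2 : (a ^ 2 / Real.exp 2) * (σ / s) = (a ^ 2 / (Real.exp 2 * s)) * σ := by
        field_simp
      have h3 : σ * σ ≤ (a * s + a ^ 2 / (Real.exp 2 * s)) * σ := by nlinarith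
      exact le_of_mul_le_mul_right (by linarith) hσ
    have hsmall : a ^ 2 / (Real.exp 2 * s) ≤ a := by
      rw [div_le_iff₀ (by positivity)]
      have h7 : (1:ℝ) ≤ Real.exp 2 * s := by nlinarith
      nlinarith
    have hfinal : σ ≤ 3 * a * r := by
      have h4 : a * s = 2 * (a * r) := by rw [hsdef]; ring
      have h5 : a ≤ a * r := by nlinarith
      linarith
    have h6 : (0:ℝ) ≤ 3 * a * r := by positivity
    calc Wv = σ ^ 2 := hσ2.symm
      _ ≤ (3 * a * r) ^ 2 := by nlinarith
      _ = 9 * a ^ 2 * L := by rw [mul_pow, mul_pow, hr2]; ring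


lemma W2_nonneg (f : (Fin n → Bool) → ℝ) : 0 ≤ W2 n f :=
  Finset.sum_nonneg fun i _ => sq_nonneg _

lemma sum_eq_expect (f : (Fin n → Bool) → ℝ) :
    ∑ x : Fin n → Bool, f x = 2 ^ n * expect n f := by
  unfold _root_.expect
  field_simp

lemma expect_nonneg (f : (Fin n → Bool) → ℝ) (hf : ∀ x, 0 ≤ f x) :
    0 ≤ expect n f := by
  unfold _root_.expect
  have : 0 ≤ ∑ x : Fin n → Bool, f x := Finset.sum_nonneg fun x _ => hf x
  positivity

lemma expect_le_one (f : (Fin n → Bool) → ℝ) (hf : ∀ x, f x ≤ 1) :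
    expect n f ≤ 1 := by
  unfold _root_.expect
  rw [div_le_one two_pow_pos]
  calc ∑ x : Fin n → Bool, f x ≤ ∑ _x : Fin n → Bool, (1:ℝ) :=
        Finset.sum_le_sum fun x _ => hf x
    _ = 2 ^ n := by simp [Finset.card_univ]

lemma expect_mono (f g : (Fin n → Bool) → ℝ) (h : ∀ x, f x ≤ g x) :
    expect n f ≤ expect n g := by
  unfold _root_.expect
  have h1 : ∑ x : Fin n → Bool, f x ≤ ∑ x : Fin n → Bool, g x :=
    Finset.sum_le_sum fun x _ => h x
  exact (div_le_div_iff_of_pos_right two_pow_pos).2 h1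

/-- The key self-bounding inequality coming from the exponential moment method. -/
lemma key_ineq (f : (Fin n → Bool) → ℝ) (hf0 : ∀ x, 0 ≤ f x) (hf1 : ∀ x, f x ≤ 1)
    (t T : ℝ) (ht : 0 < t) :
    W2 n f ≤ expect n f * T + Real.exp (t ^ 2 * W2 n f / 2 - t * T - 1) / t := by
  have h2n : (0:ℝ) < 2 ^ n := two_pow_pos
  have step1 : 2 ^ n * W2 n f ≤
      ∑ x : Fin n → Bool, (f x * T + Real.exp (t * ell n f x - t * T - 1) / t) := by
    rw [← sum_f_ell f]
    exact Finset.sum_le_sum fun x _ => ptwise (f x) (ell n f x) T t (hf0 x) (hf1 x) ht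
  have step2 : ∑ x : Fin n → Bool, (f x * T + Real.exp (t * ell n f x - t * T - 1) / t)
      = T * (2 ^ n * expect n f)
        + (Real.exp (-(t * T) - 1) / t) * ∑ x : Fin n → Bool, Real.exp (t * ell n f x) := by
    rw [Finset.sum_add_distrib]
    congr 1
    · rw [← Finset.sum_mul, sum_eq_expect]; ring
    · rw [Finset.mul_sum]
      refine Finset.sum_congr rfl fun x _ => ?_
      rw [show t * ell n f x - t * T - 1 = (-(t * T) - 1) + t * ell n f x by ring,
        Real.exp_add]
      ring
  have step3 : (Real.exp (-(t * T) - 1) / t) * ∑ x : Fin n → Bool, Real.exp (t * ell n f x)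
      ≤ (Real.exp (-(t * T) - 1) / t) * (2 ^ n * Real.exp (t ^ 2 * W2 n f / 2)) := by
    apply mul_le_mul_of_nonneg_left (mgf f t) (by positivity)
  have step4 : (Real.exp (-(t * T) - 1) / t) * (2 ^ n * Real.exp (t ^ 2 * W2 n f / 2))
      = 2 ^ n * (Real.exp (t ^ 2 * W2 n f / 2 - t * T - 1) / t) := by
    rw [show t ^ 2 * W2 n f / 2 - t * T - 1 = (-(t * T) - 1) + t ^ 2 * W2 n f / 2 by ring,
      Real.exp_add]
    field_simp
  have : 2 ^ n * W2 n f ≤ 2 ^ n * (expect n f * T + Real.exp (t ^ 2 * W2 n f / 2 - t * T - 1) / t) := by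
    rw [mul_add]
    calc 2 ^ n * W2 n f
        ≤ T * (2 ^ n * expect n f)
          + (Real.exp (-(t * T) - 1) / t) * ∑ x : Fin n → Bool, Real.exp (t * ell n f x) := by
          rw [← step2]; exact step1
      _ ≤ T * (2 ^ n * expect n f)
          + 2 ^ n * (Real.exp (t ^ 2 * W2 n f / 2 - t * T - 1) / t) := by
          rw [← step4]; linarith
      _ = 2 ^ n * (expect n f * T) + 2 ^ n * (Real.exp (t ^ 2 * W2 n f / 2 - t * T - 1) / t) := by
          ring
  exact le_of_mul_le_mul_left this h2n

lemma level1_raw (f : (Fin n → Bool) → ℝ) (hf0 : ∀ x, 0 ≤ f x) (hf1 : ∀ x, f x ≤ 1)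
    (hα0 : 0 < expect n f) :
    W2 n f ≤ 9 * (expect n f) ^ 2 * Real.log (Real.exp 1 / expect n f) :=
  arith (W2 n f) (expect n f) (W2_nonneg f) hα0 (expect_le_one f hf1)
    (fun t T ht => key_ineq f hf0 hf1 t T ht)

lemma A_one_sub (f : (Fin n → Bool) → ℝ) (i : Fin n) :
    A n (fun x => 1 - f x) i = - A n f i := by
  have h1 := sum_mul_c (n := n) (fun x => 1 - f x) i
  have h2 := sum_mul_c (n := n) f i
  have h3 : ∑ x : Fin n → Bool, (1 - f x) * c (x i)
      = ∑ x : Fin n → Bool, c (x i) - ∑ x : Fin n → Bool, f x * c (x i) := by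
    rw [← Finset.sum_sub_distrib]
    exact Finset.sum_congr rfl fun x _ => by ring
  rw [h3, sum_c, h2] at h1
  have h2n : (0:ℝ) < 2 ^ n := two_pow_pos
  nlinarith [h1]

lemma W2_one_sub (f : (Fin n → Bool) → ℝ) :
    W2 n (fun x => 1 - f x) = W2 n f := by
  unfold W2
  refine Finset.sum_congr rfl fun i _ => ?_
  rw [A_one_sub]
  ring

lemma expect_one_sub (f : (Fin n → Bool) → ℝ) :
    expect n (fun x => 1 - f x) = 1 - expect n f := by
  unfold _root_.expect
  rw [Finset.sum_sub_distrib]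
  simp [Finset.card_univ]
  field_simp

/-- Level-1 inequality with `E' = min(E, 1-E)`. -/
lemma level1 (f : (Fin n → Bool) → ℝ) (hf : ∀ x, f x ∈ Set.Icc (0:ℝ) 1)
    (ha : 0 < min (expect n f) (1 - expect n f)) :
    W2 n f ≤ 9 * (min (expect n f) (1 - expect n f)) ^ 2
      * Real.log (Real.exp 1 / min (expect n f) (1 - expect n f)) := by
  rcases min_cases (expect n f) (1 - expect n f) with ⟨hm, _⟩ | ⟨hm, hlt⟩
  · rw [hm]
    rw [hm] at ha
    exact level1_raw f (fun x => (hf x).1) (fun x => (hf x).2) ha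
  · rw [hm]
    rw [hm] at ha
    have h := level1_raw (fun x => 1 - f x)
      (fun x => show (0:ℝ) ≤ 1 - f x by linarith [(hf x).2])
      (fun x => show 1 - f x ≤ 1 by linarith [(hf x).1]) (by rwa [expect_one_sub])
    rwa [W2_one_sub, expect_one_sub] at h

lemma bessel (f : (Fin n → Bool) → ℝ) :
    W2 n f ≤ expect n (fun x => f x ^ 2) - (expect n f) ^ 2 := by
  set α := expect n f with hα
  have h2n : (0:ℝ) < 2 ^ n := two_pow_pos
  have h0 : 0 ≤ ∑ x : Fin n → Bool, (f x - α - ell n f x) ^ 2 :=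
    Finset.sum_nonneg fun x _ => sq_nonneg _
  have T2 : ∑ _x : Fin n → Bool, α ^ 2 = 2 ^ n * α ^ 2 := by
    rw [Finset.sum_const, Finset.card_univ]
    simp [mul_comm]
  have T4 : ∑ x : Fin n → Bool, 2 * α * f x = 2 * α * (2 ^ n * α) := by
    rw [← Finset.mul_sum, sum_eq_expect, ← hα]
  have T5 : ∑ x : Fin n → Bool, 2 * (f x * ell n f x) = 2 * (2 ^ n * W2 n f) := by
    rw [← Finset.mul_sum, sum_f_ell]
  have T6 : ∑ x : Fin n → Bool, 2 * α * ell n f x = 0 := by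
    rw [← Finset.mul_sum, sum_ell, mul_zero]
  have hexpand : ∑ x : Fin n → Bool, (f x - α - ell n f x) ^ 2
      = ∑ x : Fin n → Bool, f x ^ 2 + 2 ^ n * α ^ 2 + 2 ^ n * W2 n f
        - 2 * α * (2 ^ n * α) - 2 * (2 ^ n * W2 n f) + 0 := by
    have e1 : ∀ x : Fin n → Bool, (f x - α - ell n f x) ^ 2
        = f x ^ 2 + α ^ 2 + (ell n f x) ^ 2 - 2 * α * f x - 2 * (f x * ell n f x)
          + 2 * α * ell n f x := fun x => by ring
    rw [Finset.sum_congr rfl fun x _ => e1 x]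
    simp only [Finset.sum_add_distrib, Finset.sum_sub_distrib]
    rw [T2, T4, T5, T6, sum_ell_sq]
  have hsum : 2 ^ n * W2 n f + 2 ^ n * α ^ 2 ≤ ∑ x : Fin n → Bool, f x ^ 2 := by
    rw [hexpand] at h0
    nlinarith [h0]
  have : expect n (fun x => f x ^ 2) = (∑ x : Fin n → Bool, f x ^ 2) / 2 ^ n := rfl
  rw [this, le_sub_iff_add_le, le_div_iff₀ h2n]
  nlinarith [hsum]

lemma W_one_eq (f g : (Fin n → Bool) → ℝ) :
    W n 1 f g = ∑ i, A n f i * A n g i := by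
  unfold W
  rw [show Finset.univ.filter (fun S : Finset (Fin n) => S.card = 1)
      = Finset.univ.image (fun i : Fin n => ({i} : Finset (Fin n))) from ?_]
  · rw [Finset.sum_image (fun i _ j _ h => Finset.singleton_injective h)]
    rfl
  · ext S
    simp only [Finset.mem_filter, Finset.mem_univ, true_and, Finset.mem_image,
      Finset.card_eq_one]
    constructor
    · rintro ⟨a, rfl⟩
      exact ⟨a, rfl⟩
    · rintro ⟨a, rfl⟩
      exact ⟨a, rfl⟩

lemma W2_le_min (f : (Fin n → Bool) → ℝ) (hf : ∀ x, f x ∈ Set.Icc (0:ℝ) 1) :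
    W2 n f ≤ min (expect n f) (1 - expect n f) := by
  have h1 := bessel f
  have h2 : expect n (fun x => f x ^ 2) ≤ expect n f :=
    expect_mono _ _ (fun x => by nlinarith [(hf x).1, (hf x).2])
  have h3 : 0 ≤ expect n f := expect_nonneg f fun x => (hf x).1
  have h4 : expect n f ≤ 1 := expect_le_one f fun x => (hf x).2
  apply le_min
  · nlinarith
  · nlinarith

lemma W2_eq_zero_of_min_nonpos (f : (Fin n → Bool) → ℝ)
    (hf : ∀ x, f x ∈ Set.Icc (0:ℝ) 1)
    (ha : min (expect n f) (1 - expect n f) ≤ 0) : W2 n f = 0 := by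
  have h1 := W2_le_min f hf
  exact le_antisymm (le_trans h1 ha) (W2_nonneg f)


end TalAux

open TalAux in
/-- Necessary condition for tightness of Talagrand's bound: for increasing
`f, g : {0,1}^n → [0,1]`, `W₁(f,g)/log(e/W₁(f,g)) ≤ c·E'[f]·E'[g]`
where `E'[h] = min(E[h], 1 − E[h])`. -/
theorem talagrand_rhs_upper_bound :
    ∃ c : ℝ, 0 < c ∧ ∀ (n : ℕ) (f g : (Fin n → Bool) → ℝ),
      Monotone f → Monotone g →
      (∀ x, f x ∈ Set.Icc (0 : ℝ) 1) → (∀ x, g x ∈ Set.Icc (0 : ℝ) 1) →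
      0 < W n 1 f g →
      W n 1 f g / Real.log (Real.exp 1 / W n 1 f g) ≤
        c * min (expect n f) (1 - expect n f) * min (expect n g) (1 - expect n g) := by
  refine ⟨9, by norm_num, fun n f g _ _ hf hg hW1 => ?_⟩
  set a := min (expect n f) (1 - expect n f) with hadef
  set b := min (expect n g) (1 - expect n g) with hbdef
  -- positivity of a and b
  have hCS : W n 1 f g ≤ Real.sqrt (W2 n f) * Real.sqrt (W2 n g) := by
    rw [W_one_eq]
    exact Real.sum_mul_le_sqrt_mul_sqrt Finset.univ _ _
  have ha : 0 < a := by
    by_contra h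
    push_neg at h
    have h0 : W2 n f = 0 := W2_eq_zero_of_min_nonpos f hf h
    rw [h0] at hCS
    simp at hCS
    linarith
  have hb : 0 < b := by
    by_contra h
    push_neg at h
    have h0 : W2 n g = 0 := W2_eq_zero_of_min_nonpos g hg h
    rw [h0] at hCS
    simp at hCS
    linarith
  have ha1 : a ≤ 1 := by
    have := expect_le_one f fun x => (hf x).2
    have := expect_nonneg f fun x => (hf x).1
    rw [hadef]
    rcases min_cases (expect n f) (1 - expect n f) with ⟨hm, _⟩ | ⟨hm, _⟩ <;> rw [hm] <;> linarith
  have hb1 : b ≤ 1 := by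
    have := expect_le_one g fun x => (hg x).2
    have := expect_nonneg g fun x => (hg x).1
    rw [hbdef]
    rcases min_cases (expect n g) (1 - expect n g) with ⟨hm, _⟩ | ⟨hm, _⟩ <;> rw [hm] <;> linarith
  set La := Real.log (Real.exp 1 / a) with hLadef
  set Lb := Real.log (Real.exp 1 / b) with hLbdef
  have hLa_eq : La = 1 - Real.log a := by
    rw [hLadef, Real.log_div (Real.exp_ne_zero 1) (ne_of_gt ha), Real.log_exp]
  have hLb_eq : Lb = 1 - Real.log b := by
    rw [hLbdef, Real.log_div (Real.exp_ne_zero 1) (ne_of_gt hb), Real.log_exp]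
  have hLa1 : 1 ≤ La := by
    rw [hLa_eq]
    have := Real.log_nonpos ha.le ha1
    linarith
  have hLb1 : 1 ≤ Lb := by
    rw [hLb_eq]
    have := Real.log_nonpos hb.le hb1
    linarith
  clear_value La Lb
  -- numerator bound
  have hsf : Real.sqrt (W2 n f) ≤ 3 * a * Real.sqrt La := by
    have h1 : W2 n f ≤ 9 * a ^ 2 * La := by
      rw [hLadef]; exact level1 f hf ha
    calc Real.sqrt (W2 n f) ≤ Real.sqrt (9 * a ^ 2 * La) := Real.sqrt_le_sqrt h1
      _ = 3 * a * Real.sqrt La := by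
        rw [show 9 * a ^ 2 * La = (3 * a) ^ 2 * La by ring,
          Real.sqrt_mul (sq_nonneg _), Real.sqrt_sq (by positivity)]
  have hsg : Real.sqrt (W2 n g) ≤ 3 * b * Real.sqrt Lb := by
    have h1 : W2 n g ≤ 9 * b ^ 2 * Lb := by
      rw [hLbdef]; exact level1 g hg hb
    calc Real.sqrt (W2 n g) ≤ Real.sqrt (9 * b ^ 2 * Lb) := Real.sqrt_le_sqrt h1
      _ = 3 * b * Real.sqrt Lb := by
        rw [show 9 * b ^ 2 * Lb = (3 * b) ^ 2 * Lb by ring,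
          Real.sqrt_mul (sq_nonneg _), Real.sqrt_sq (by positivity)]
  have hnum : W n 1 f g ≤ 9 * a * b * Real.sqrt (La * Lb) := by
    calc W n 1 f g ≤ Real.sqrt (W2 n f) * Real.sqrt (W2 n g) := hCS
      _ ≤ (3 * a * Real.sqrt La) * (3 * b * Real.sqrt Lb) := by
          apply mul_le_mul hsf hsg (Real.sqrt_nonneg _)
          positivity
      _ = 9 * a * b * (Real.sqrt La * Real.sqrt Lb) := by ring
      _ = 9 * a * b * Real.sqrt (La * Lb) := by
          rw [Real.sqrt_mul (by linarith)]
  -- denominator bound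
  have hWab : W n 1 f g ≤ Real.sqrt (a * b) := by
    calc W n 1 f g ≤ Real.sqrt (W2 n f) * Real.sqrt (W2 n g) := hCS
      _ ≤ Real.sqrt a * Real.sqrt b := by
          apply mul_le_mul (Real.sqrt_le_sqrt (W2_le_min f hf))
            (Real.sqrt_le_sqrt (W2_le_min g hg)) (Real.sqrt_nonneg _) (Real.sqrt_nonneg _)
      _ = Real.sqrt (a * b) := (Real.sqrt_mul ha.le b).symm
  have hden : Real.sqrt (La * Lb) ≤ Real.log (Real.exp 1 / W n 1 f g) := by
    have h1 : Real.log (W n 1 f g) ≤ (Real.log a + Real.log b) / 2 := by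
      calc Real.log (W n 1 f g) ≤ Real.log (Real.sqrt (a * b)) :=
            Real.log_le_log hW1 hWab
        _ = Real.log (a * b) / 2 := Real.log_sqrt (by positivity)
        _ = (Real.log a + Real.log b) / 2 := by
            rw [Real.log_mul (ne_of_gt ha) (ne_of_gt hb)]
    have h2 : Real.log (Real.exp 1 / W n 1 f g) = 1 - Real.log (W n 1 f g) := by
      rw [Real.log_div (Real.exp_ne_zero 1) (ne_of_gt hW1), Real.log_exp]
    have h3 : (La + Lb) / 2 ≤ Real.log (Real.exp 1 / W n 1 f g) := by
      rw [h2, hLa_eq, hLb_eq]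
      linarith
    have h4 : Real.sqrt (La * Lb) ≤ (La + Lb) / 2 := by
      have h5 : La * Lb ≤ ((La + Lb) / 2) ^ 2 := by nlinarith [sq_nonneg (La - Lb)]
      calc Real.sqrt (La * Lb) ≤ Real.sqrt (((La + Lb) / 2) ^ 2) := Real.sqrt_le_sqrt h5
        _ = (La + Lb) / 2 := Real.sqrt_sq (by linarith)
    linarith
  have hsqrtpos : 0 < Real.sqrt (La * Lb) := Real.sqrt_pos.2 (by nlinarith)
  calc W n 1 f g / Real.log (Real.exp 1 / W n 1 f g)
      ≤ W n 1 f g / Real.sqrt (La * Lb) :=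
        div_le_div_of_nonneg_left hW1.le hsqrtpos hden
    _ ≤ (9 * a * b * Real.sqrt (La * Lb)) / Real.sqrt (La * Lb) := by
        exact (div_le_div_iff_of_pos_right hsqrtpos).2 hnum
    _ = 9 * a * b := by
        field_simp
end

section
/- For every constant c₀ > 0 there exists a constant c' > 0 (depending only on c₀) such that the following holds. Let A ⊆ {0,1}^n be an increasing family with 0 < μ(A) < 1 that is first-level optimal with constant c₀, i.e., W_1(1_A) ≥ c₀ · μ'(A)² · log(e/μ'(A)) where μ'(A) = min(μ(A), 1 − μ(A)), and let B = {x : x̄ ∉ A} be the dual family of A (x̄ denotes the coordinatewise complement of x). Then Cov(A,B) ≤ c' · W_1(1_A, 1_B) / log(e / W_1(1_A, 1_B)); that is, Talagrand's correlation lower bound is tight for (A,B) up to a constant factor. -/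
open Finset

/-- A family `A ⊆ {0,1}^n` is increasing (monotone). -/
def IncrFam (n : ℕ) (A : Finset (Fin n → Bool)) : Prop :=
  ∀ x ∈ A, ∀ y : Fin n → Bool, x ≤ y → y ∈ A

/-- The uniform measure of a family. -/
noncomputable def mu (n : ℕ) (A : Finset (Fin n → Bool)) : ℝ :=
  (A.card : ℝ) / 2 ^ n

/-- `μ'(A) = min(μ(A), 1 − μ(A))`. -/
noncomputable def mu' (n : ℕ) (A : Finset (Fin n → Bool)) : ℝ :=
  min (mu n A) (1 - mu n A)

/-- Covariance of two families: `μ(A ∩ B) − μ(A)μ(B)`. -/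
noncomputable def famCov (n : ℕ) (A B : Finset (Fin n → Bool)) : ℝ :=
  mu n (A ∩ B) - mu n A * mu n B

/-- The 0/1 indicator of a family. -/
noncomputable def ind (n : ℕ) (A : Finset (Fin n → Bool)) : (Fin n → Bool) → ℝ :=
  fun x => if x ∈ A then 1 else 0

/-- The dual family `B = {x : x̄ ∉ A}`, where `x̄` is the coordinatewise complement. -/
def dualFam (n : ℕ) (A : Finset (Fin n → Bool)) : Finset (Fin n → Bool) :=
  Finset.univ.filter (fun x : Fin n → Bool => (fun i => !x i) ∉ A)

/-- `W₁(f,g) = Σᵢ f̂({i})ĝ({i})`. -/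
noncomputable def W1 (n : ℕ) (f g : (Fin n → Bool) → ℝ) : ℝ :=
  ∑ i : Fin n, coef n f {i} * coef n g {i}


lemma chi_single (n : ℕ) (i : Fin n) (x : Fin n → Bool) :
    chi n {i} x = if x i then (-1:ℝ) else 1 := by
  simp [chi]

lemma sum_chi_mul_eq_zero (n : ℕ) (i : Fin n) (h : (Fin n → Bool) → ℝ)
    (hh : ∀ x, h (Function.update x i (!(x i))) = h x) :
    ∑ x : Fin n → Bool, chi n {i} x * h x = 0 := by
  apply Finset.sum_ninvolution (fun x => Function.update x i (!(x i)))
  · intro x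
    rw [hh x, chi_single, chi_single, Function.update_self]
    cases x i <;> simp <;> ring
  · intro x hx
    intro hcontra
    have := congrFun hcontra i
    rw [Function.update_self] at this
    cases hxi : x i <;> rw [hxi] at this <;> simp at this
  · intro x; exact Finset.mem_univ _
  · intro x
    funext k
    by_cases hk : k = i
    · subst hk; simp
    · simp [Function.update_of_ne hk]
lemma sum_chi_single_zero (n : ℕ) (i : Fin n) :
    ∑ x : Fin n → Bool, chi n {i} x = 0 := by
  have := sum_chi_mul_eq_zero n i (fun _ => 1) (fun x => rfl)
  simpa using this

lemma sum_chi_orth (n : ℕ) (i j : Fin n) :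
    ∑ x : Fin n → Bool, chi n {i} x * chi n {j} x
      = if i = j then (2:ℝ)^n else 0 := by
  by_cases hij : i = j
  · subst hij
    simp only [if_pos rfl]
    have h1 : ∀ x : Fin n → Bool, chi n {i} x * chi n {i} x = 1 := by
      intro x; rw [chi_single]; cases x i <;> norm_num
    rw [Finset.sum_congr rfl (fun x _ => h1 x)]
    simp [Finset.card_univ]
  · rw [if_neg hij]
    apply sum_chi_mul_eq_zero n i (chi n {j})
    intro x
    rw [chi_single, chi_single, Function.update_of_ne (fun h => hij h.symm)]

lemma sum_eq_coef (n : ℕ) (f : (Fin n → Bool) → ℝ) (S : Finset (Fin n)) :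
    ∑ x : Fin n → Bool, f x * chi n S x = 2^n * coef n f S := by
  simp only [coef, _root_.expect]
  field_simp

lemma bessel (n : ℕ) (A : Finset (Fin n → Bool)) :
    ∑ i : Fin n, (coef n (ind n A) {i})^2 ≤ mu n A := by
  set f := ind n A with hf
  set c : Fin n → ℝ := fun i => coef n f {i} with hc
  have hN : (0:ℝ) < 2^n := by positivity
  have key : ∑ x : Fin n → Bool, (f x - ∑ i : Fin n, c i * chi n {i} x)^2
      = (∑ x : Fin n → Bool, (f x)^2) - 2^n * ∑ i : Fin n, (c i)^2 := by
    have e1 : ∑ x : Fin n → Bool, f x * (∑ i : Fin n, c i * chi n {i} x)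
        = 2^n * ∑ i : Fin n, (c i)^2 := by
      calc ∑ x : Fin n → Bool, f x * (∑ i : Fin n, c i * chi n {i} x)
          = ∑ x : Fin n → Bool, ∑ i : Fin n, c i * (f x * chi n {i} x) := by
            apply Finset.sum_congr rfl; intro x _; rw [Finset.mul_sum]
            apply Finset.sum_congr rfl; intro i _; ring
        _ = ∑ i : Fin n, c i * ∑ x : Fin n → Bool, f x * chi n {i} x := by
            rw [Finset.sum_comm]
            exact Finset.sum_congr rfl fun i _ => (Finset.mul_sum _ _ _).symm
        _ = ∑ i : Fin n, c i * (2^n * c i) := by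
            apply Finset.sum_congr rfl; intro i _; rw [sum_eq_coef]
        _ = 2^n * ∑ i : Fin n, (c i)^2 := by
            rw [Finset.mul_sum]; apply Finset.sum_congr rfl; intro i _; ring
    have e2 : ∑ x : Fin n → Bool, (∑ i : Fin n, c i * chi n {i} x)^2
        = 2^n * ∑ i : Fin n, (c i)^2 := by
      calc ∑ x : Fin n → Bool, (∑ i : Fin n, c i * chi n {i} x)^2
          = ∑ x : Fin n → Bool, ∑ i : Fin n, ∑ j : Fin n,
              (c i * c j) * (chi n {i} x * chi n {j} x) := by
            apply Finset.sum_congr rfl; intro x _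
            rw [sq, Finset.sum_mul_sum]
            apply Finset.sum_congr rfl; intro i _
            apply Finset.sum_congr rfl; intro j _; ring
        _ = ∑ i : Fin n, ∑ j : Fin n,
              (c i * c j) * ∑ x : Fin n → Bool, chi n {i} x * chi n {j} x := by
            rw [Finset.sum_comm]
            apply Finset.sum_congr rfl; intro i _
            rw [Finset.sum_comm]
            exact Finset.sum_congr rfl fun j _ => (Finset.mul_sum _ _ _).symm
        _ = ∑ i : Fin n, ∑ j : Fin n,
              (c i * c j) * (if i = j then (2:ℝ)^n else 0) := by
            apply Finset.sum_congr rfl; intro i _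
            apply Finset.sum_congr rfl; intro j _
            rw [sum_chi_orth]
        _ = 2^n * ∑ i : Fin n, (c i)^2 := by
            rw [Finset.mul_sum]
            apply Finset.sum_congr rfl; intro i _
            simp only [mul_ite, mul_zero]
            rw [Finset.sum_ite_eq]
            simp only [Finset.mem_univ, if_true]
            ring
    calc ∑ x : Fin n → Bool, (f x - ∑ i : Fin n, c i * chi n {i} x)^2
        = ∑ x : Fin n → Bool, ((f x)^2
            - 2 * (f x * (∑ i : Fin n, c i * chi n {i} x))
            + (∑ i : Fin n, c i * chi n {i} x)^2) := by
          apply Finset.sum_congr rfl; intro x _; ring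
      _ = (∑ x : Fin n → Bool, (f x)^2)
            - 2 * (∑ x : Fin n → Bool, f x * (∑ i : Fin n, c i * chi n {i} x))
            + ∑ x : Fin n → Bool, (∑ i : Fin n, c i * chi n {i} x)^2 := by
          rw [Finset.sum_add_distrib, Finset.sum_sub_distrib, Finset.mul_sum]
      _ = _ := by rw [e1, e2]; ring
  have hnonneg : (0:ℝ) ≤ ∑ x : Fin n → Bool, (f x - ∑ i : Fin n, c i * chi n {i} x)^2 := by
    positivity
  have hsq : ∑ x : Fin n → Bool, (f x)^2 = A.card := by
    have : ∀ x : Fin n → Bool, (f x)^2 = if x ∈ A then (1:ℝ) else 0 := by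
      intro x; rw [hf]; simp only [ind]; split <;> norm_num
    rw [Finset.sum_congr rfl (fun x _ => this x)]
    rw [Finset.sum_ite_mem]
    simp
  rw [key, hsq] at hnonneg
  rw [mu, le_div_iff₀ hN]
  nlinarith [hnonneg]
def negc (n : ℕ) : Equiv.Perm (Fin n → Bool) :=
  Function.Involutive.toPerm (fun x => fun k => !(x k)) (by intro x; funext k; simp)

lemma comp_comp (n : ℕ) (y : Fin n → Bool) : (fun i => !(!(y i))) = y := by
  funext i; simp

lemma ind_dual_comp (n : ℕ) (A : Finset (Fin n → Bool)) (y : Fin n → Bool) :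
    ind n (dualFam n A) (fun k => !(y k)) = 1 - ind n A y := by
  simp only [ind, dualFam, Finset.mem_filter, Finset.mem_univ, true_and, comp_comp]
  by_cases h : y ∈ A <;> simp [h]

lemma chi_comp (n : ℕ) (i : Fin n) (y : Fin n → Bool) :
    chi n {i} (fun k => !(y k)) = -(chi n {i} y) := by
  rw [chi_single, chi_single]; cases y i <;> norm_num

lemma coef_dual (n : ℕ) (A : Finset (Fin n → Bool)) (i : Fin n) :
    coef n (ind n (dualFam n A)) {i} = coef n (ind n A) {i} := by
  simp only [coef, _root_.expect]
  congr 1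
  calc ∑ x : Fin n → Bool, ind n (dualFam n A) x * chi n {i} x
      = ∑ y : Fin n → Bool, ind n (dualFam n A) (negc n y) * chi n {i} (negc n y) := by
        exact (Equiv.sum_comp (negc n) (fun x => ind n (dualFam n A) x * chi n {i} x)).symm
    _ = ∑ y : Fin n → Bool, ((1 - ind n A y) * (-(chi n {i} y))) := by
        apply Finset.sum_congr rfl; intro y _
        have h1 : (negc n y : Fin n → Bool) = fun k => !(y k) := rfl
        rw [h1, ind_dual_comp, chi_comp]
    _ = ∑ y : Fin n → Bool, (ind n A y * chi n {i} y - chi n {i} y) := by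
        apply Finset.sum_congr rfl; intro y _; ring
    _ = ∑ y : Fin n → Bool, ind n A y * chi n {i} y := by
        rw [Finset.sum_sub_distrib, sum_chi_single_zero]; ring

lemma card_eq_sum_ind (n : ℕ) (A : Finset (Fin n → Bool)) :
    (A.card : ℝ) = ∑ x : Fin n → Bool, ind n A x := by
  simp only [ind]
  rw [Finset.sum_ite_mem]
  simp

lemma mu_dual (n : ℕ) (A : Finset (Fin n → Bool)) :
    mu n (dualFam n A) = 1 - mu n A := by
  have hN : ((2:ℝ))^n ≠ 0 := by positivity
  have h : ((dualFam n A).card : ℝ) = 2^n - A.card := by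
    rw [card_eq_sum_ind]
    calc ∑ x : Fin n → Bool, ind n (dualFam n A) x
        = ∑ y : Fin n → Bool, ind n (dualFam n A) (negc n y) := by
          exact (Equiv.sum_comp (negc n) (fun x => ind n (dualFam n A) x)).symm
      _ = ∑ y : Fin n → Bool, (1 - ind n A y) := by
          apply Finset.sum_congr rfl; intro y _
          exact ind_dual_comp n A y
      _ = 2^n - A.card := by
          rw [Finset.sum_sub_distrib, ← card_eq_sum_ind]
          simp [Finset.card_univ]
  rw [mu, mu, h]
  field_simp

lemma mu_mono (n : ℕ) {A B : Finset (Fin n → Bool)} (h : A ⊆ B) : mu n A ≤ mu n B := by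
  rw [mu, mu]
  have hc : (A.card : ℝ) ≤ B.card := by exact_mod_cast Finset.card_le_card h
  gcongr

/-- If `A` is increasing, nondegenerate and first-level optimal with constant `c₀`,
and `B` is its dual, then Talagrand's bound is tight (up to a constant) for `(A,B)`:
`Cov(A,B) ≤ c'·W₁(1_A,1_B)/log(e/W₁(1_A,1_B))`. -/
theorem talagrand_tight_for_first_level_optimal_dual :
    ∀ c₀ : ℝ, 0 < c₀ → ∃ c' : ℝ, 0 < c' ∧
      ∀ (n : ℕ) (A : Finset (Fin n → Bool)),
        IncrFam n A → 0 < mu n A → mu n A < 1 →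
        W1 n (ind n A) (ind n A) ≥
          c₀ * (mu' n A) ^ 2 * Real.log (Real.exp 1 / mu' n A) →
        famCov n A (dualFam n A) ≤
          c' * W1 n (ind n A) (ind n (dualFam n A)) /
            Real.log (Real.exp 1 / W1 n (ind n A) (ind n (dualFam n A))) := by
  intro c₀ hc₀
  set M := max 0 (-Real.log c₀) with hM
  have hM0 : 0 ≤ M := le_max_left _ _
  have hMc : -Real.log c₀ ≤ M := le_max_right _ _
  refine ⟨(3 + M) / c₀, by positivity, ?_⟩
  intro n A hIncr hm0 hm1 hopt
  set m := mu n A with hm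
  set m' := mu' n A with hm'
  set B := dualFam n A with hB
  have hm'pos : 0 < m' := lt_min hm0 (by linarith)
  have hm'le : m' ≤ m := min_le_left _ _
  have hm'lt1 : m' < 1 := lt_of_le_of_lt hm'le hm1
  -- W1(A,B) = W1(A,A) = sum of squares
  set W := W1 n (ind n A) (ind n B) with hW
  have hWsq : W = ∑ i : Fin n, (coef n (ind n A) {i})^2 := by
    rw [hW, W1]
    apply Finset.sum_congr rfl; intro i _
    rw [hB, coef_dual, sq]
  have hWAA : W1 n (ind n A) (ind n A) = W := by
    rw [hWsq, W1]
    apply Finset.sum_congr rfl; intro i _; rw [sq]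
  -- log(e/m') = 1 + ℓ
  set ℓ := -Real.log m' with hℓ
  have hℓ0 : 0 ≤ ℓ := by
    rw [hℓ]
    have := Real.log_nonpos (le_of_lt hm'pos) (le_of_lt hm'lt1)
    linarith
  have hlogm' : Real.log (Real.exp 1 / m') = 1 + ℓ := by
    rw [Real.log_div (Real.exp_ne_zero 1) (ne_of_gt hm'pos), Real.log_exp, hℓ]
    ring
  have hW_ge : W ≥ c₀ * m'^2 * (1 + ℓ) := by
    rw [← hlogm']
    rw [hWAA] at hopt
    exact hopt
  have hW_ge' : W ≥ c₀ * m'^2 := by nlinarith [mul_nonneg (mul_nonneg hc₀.le (sq_nonneg m')) hℓ0]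
  have hW_pos : 0 < W := lt_of_lt_of_le (by positivity) hW_ge'
  have hW_le : W ≤ m := by rw [hWsq, hm]; exact bessel n A
  have hW_lt1 : W < 1 := lt_of_le_of_lt hW_le hm1
  -- log(e/W) bounds
  have hlogW : Real.log (Real.exp 1 / W) = 1 - Real.log W := by
    rw [Real.log_div (Real.exp_ne_zero 1) (ne_of_gt hW_pos), Real.log_exp]
  have hlogW_pos : 0 < Real.log (Real.exp 1 / W) := by
    rw [hlogW]
    have := Real.log_neg hW_pos hW_lt1
    linarith
  have hlogW_le : Real.log (Real.exp 1 / W) ≤ 1 + (-Real.log c₀) + 2 * ℓ := by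
    rw [hlogW]
    have h1 : Real.log (c₀ * m'^2) ≤ Real.log W :=
      Real.log_le_log (by positivity) hW_ge'
    rw [Real.log_mul (ne_of_gt hc₀) (by positivity), Real.log_pow] at h1
    push_cast at h1
    rw [hℓ]
    linarith
  have hlogW_le2 : Real.log (Real.exp 1 / W) ≤ (3 + M) * (1 + ℓ) := by
    nlinarith
  -- Cov ≤ m'^2
  have hmuB : mu n B = 1 - m := by rw [hB, hm]; exact mu_dual n A
  have hAB1 : mu n (A ∩ B) ≤ m := by
    rw [hm]; exact mu_mono n (Finset.inter_subset_left)
  have hAB2 : mu n (A ∩ B) ≤ 1 - m := by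
    rw [← hmuB]; exact mu_mono n (Finset.inter_subset_right)
  have hCov : famCov n A B ≤ m'^2 := by
    rw [famCov, hmuB, ← hm]
    rcases le_total m (1 - m) with h | h
    · have : m' = m := min_eq_left h
      nlinarith
    · have : m' = 1 - m := min_eq_right h
      nlinarith
  clear_value M m m' B W ℓ
  -- conclude
  have hkey : m'^2 * Real.log (Real.exp 1 / W) ≤ (3 + M) / c₀ * W := by
    have h1 : m'^2 * Real.log (Real.exp 1 / W) ≤ m'^2 * ((3 + M) * (1 + ℓ)) :=
      mul_le_mul_of_nonneg_left hlogW_le2 (sq_nonneg m')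
    have h2 : (3 + M) / c₀ * (c₀ * m'^2 * (1 + ℓ)) ≤ (3 + M) / c₀ * W := by
      apply mul_le_mul_of_nonneg_left hW_ge (by positivity)
    have h3 : m'^2 * ((3 + M) * (1 + ℓ)) = (3 + M) / c₀ * (c₀ * m'^2 * (1 + ℓ)) := by
      field_simp
    linarith
  calc famCov n A B ≤ m'^2 := hCov
    _ ≤ (3 + M) / c₀ * W / Real.log (Real.exp 1 / W) := by
        rw [le_div_iff₀ hlogW_pos]
        exact hkey
end
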